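/- arXiv:1512.03242 — 9 statements merged into one kernel-verified Lean document; each statement's English description precedes it below -/
import Mathlib

section
/- Let F = GF(2^m) with m ≥ 3 and let β, γ ∈ F with β ≠ γ. If X ⊆ F has |X| = 4 and satisfies both Σ_{x∈X} (x+β)^3 = 0 and Σ_{x∈X} (x+γ)^3 = 0 (i.e., X is a weight-4 codeword of H̄_β ∩ H̄_γ), then β and γ cannot both belong to X. -/
open Finset

theorem stmt_1 (m : ℕ) (hm : 3 ≤ m) (β γ : GaloisField 2 m) (hβγ : β ≠ γ)
    (X : Finset (GaloisField 2 m)) (hcard : X.card = 4)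
    (hβ : ∑ x ∈ X, (x + β) ^ 3 = 0) (hγ : ∑ x ∈ X, (x + γ) ^ 3 = 0) :
    ¬(β ∈ X ∧ γ ∈ X) := by
  classical
  rintro ⟨hβX, hγX⟩
  have h2 : (2 : GaloisField 2 m) = 0 := by
    haveI : Fact (Nat.Prime 2) := ⟨Nat.prime_two⟩
    exact_mod_cast CharP.cast_eq_zero (GaloisField 2 m) 2
  have hsub : ({β, γ} : Finset (GaloisField 2 m)) ⊆ X := by
    intro x hx
    simp only [mem_insert, mem_singleton] at hx
    rcases hx with h | h <;> subst h <;> assumption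
  have hcard2 : ({β, γ} : Finset (GaloisField 2 m)).card = 2 := by
    rw [card_insert_of_notMem (by simpa using hβγ), card_singleton]
  have hYcard : (X \ {β, γ}).card = 2 := by
    rw [card_sdiff_of_subset hsub, hcard, hcard2]
  obtain ⟨a, b, hab, hYeq⟩ := card_eq_two.mp hYcard
  have haY : a ∈ X \ ({β, γ} : Finset (GaloisField 2 m)) := by rw [hYeq]; simp
  have hbY : b ∈ X \ ({β, γ} : Finset (GaloisField 2 m)) := by rw [hYeq]; simp
  simp only [mem_sdiff, mem_insert, mem_singleton, not_or] at haY hbY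
  obtain ⟨haX, haβ, haγ⟩ := haY
  obtain ⟨hbX, hbβ, hbγ⟩ := hbY
  have hXeq : X = insert β (insert γ (insert a {b})) := by
    have hu : ({β, γ} : Finset (GaloisField 2 m)) ∪ (X \ {β, γ}) = X :=
      union_sdiff_of_subset hsub
    rw [hYeq] at hu
    rw [← hu]
    ext x
    simp only [mem_union, mem_insert, mem_singleton]
    tauto
  rw [hXeq] at hβ hγ
  have hβa : β ≠ a := fun h => haβ h.symm
  have hβb : β ≠ b := fun h => hbβ h.symm
  have hγa : γ ≠ a := fun h => haγ h.symm
  have hγb : γ ≠ b := fun h => hbγ h.symm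
  rw [Finset.sum_insert (by simp [hβγ, hβa, hβb]),
      Finset.sum_insert (by simp [hγa, hγb]),
      Finset.sum_insert (by simp [hab]), Finset.sum_singleton] at hβ hγ
  -- Key nonzero facts
  have hβγ0 : β + γ ≠ 0 := by
    intro h
    exact hβγ (by linear_combination h - γ * h2)
  have hab0 : a + b ≠ 0 := by
    intro h
    exact hab (by linear_combination h - b * h2)
  have haβ0 : a + β ≠ 0 := by
    intro h
    exact haβ (by linear_combination h - β * h2)
  have hbβ0 : b + β ≠ 0 := by
    intro h
    exact hbβ (by linear_combination h - β * h2)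
  have h3 : (β + γ) * (a + b) * ((a + b) + (β + γ)) = 0 := by
    linear_combination hβ + hγ + ((-6)*γ^3 + (-3)*β*γ^2 + (-3)*β^2*γ + (-6)*β^3 +
      (-1)*b*γ^2 + b*β*γ + (-1)*b*β^2 + (-1)*b^2*γ + (-1)*b^2*β + (-1)*b^3 +
      (-1)*a*γ^2 + a*β*γ + (-1)*a*β^2 + a*b*γ + a*b*β + (-1)*a^2*γ + (-1)*a^2*β +
      (-1)*a^3) * h2
  have hs : (a + b) + (β + γ) = 0 := by
    rcases mul_eq_zero.mp h3 with h | h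
    · rcases mul_eq_zero.mp h with h | h
      · exact absurd h hβγ0
      · exact absurd h hab0
    · exact h
  have h4 : (β + γ) * ((a + β) * (b + β)) = 0 := by
    linear_combination hβ +
      ((-1)*γ^2 + (-4)*β*γ + (-6)*β^2 + (3)*b*γ + (6)*b*β + (-1)*b^2 + (-1)*a*γ +
        (-4)*a*β + a*b + (-1)*a^2) * hs +
      (β*γ^2 + (4)*β^2*γ + (-2)*β^3 + (-1)*b*γ^2 + (-2)*b*β*γ + (-1)*b*β^2 +
        (-1)*b^2*γ + (-4)*b^2*β + a*γ^2 + (5)*a*β*γ + (4)*a*β^2 + (-1)*a*b*γ +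
        (-1)*a*b*β + a^2*γ + a^2*β) * h2
  rcases mul_eq_zero.mp h4 with h | h
  · exact hβγ0 h
  · rcases mul_eq_zero.mp h with h | h
    · exact haβ0 h
    · exact hbβ0 h
end

section
/- Let F = GF(8) and let β, γ ∈ F with β ≠ γ. Then there exist subsets Π⁰, Π¹ ⊆ F with |Π⁰| = |Π¹| = 4, Π⁰ ∪ Π¹ = F, Π⁰ ∩ Π¹ = ∅, β ∈ Π⁰, γ ∈ Π¹, such that H̄_β ∩ H̄_γ = {∅, F, Π⁰, Π¹}; that is, the intersection consists of the empty set, the all-ones word, and two complementary weight-4 words separating β from γ. -/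
open Finset

noncomputable instance : DecidableEq (GaloisField 2 3) := Classical.decEq _

noncomputable instance : Fintype (GaloisField 2 3) := Fintype.ofFinite _

/-- The even-weight code `H̄_β` of length 8: subsets `X` of `GF(8)` with
`|X|` even and `∑_{x ∈ X} (x + β)^3 = 0`. -/
def HbarGF8 (β : GaloisField 2 3) : Set (Finset (GaloisField 2 3)) :=
  {X | Even X.card ∧ ∑ x ∈ X, (x + β) ^ 3 = 0}

/-!
For `X` of even size, write `S₁ = ∑ x` and `S₃ = ∑ x³`. In characteristic two
`∑ (x + θ)³ = S₃ + θ S₁² + θ² S₁`, and subtracting the conditions for `β` and `γ` leaves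
`(β + γ) S₁ (S₁ + β + γ) = 0`; so `X ∈ H̄_β ∩ H̄_γ` iff `(S₁, S₃)` is `(0, 0)` or
`(β + γ, β γ (β + γ))`. In `GF(8)` the only even sets with `S₁ = S₃ = 0` are `∅` and `F`, so
(taking symmetric differences) each syndrome is attained by exactly one pair `{Y, F \ Y}`.
The second syndrome is realised by `Π⁰ = γ + (β + γ) {1, a, b, a + b}` for any `a, b` with
`a b (a + b) = 1`; such `a, b` exist because cubing is a bijection of `GF(8)`, which also rules
out roots of `t² + t + 1` and hence makes the four points distinct.
-/

open scoped symmDiff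

namespace CharTwo

section CommRing

variable {R : Type*} [CommRing R] [CharP R 2]

theorem sum_symmDiff {ι : Type*} [DecidableEq ι] (s t : Finset ι) (f : ι → R) :
    ∑ i ∈ s ∆ t, f i = ∑ i ∈ s, f i + ∑ i ∈ t, f i := by
  have hunion : s ∆ t ∪ s ∩ t = s ∪ t := symmDiff_sup_inf s t
  have hdisj : Disjoint (s ∆ t) (s ∩ t) := disjoint_symmDiff_inf s t
  have h := sum_union (f := f) hdisj
  rw [hunion] at h
  linear_combination
    sum_union_inter (s₁ := s) (s₂ := t) (f := f) - h - add_self_eq_zero (∑ i ∈ s ∩ t, f i)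

theorem sum_compl {ι : Type*} [Fintype ι] [DecidableEq ι] (s : Finset ι) {f : ι → R}
    (hf : ∑ i, f i = 0) : ∑ i ∈ sᶜ, f i = ∑ i ∈ s, f i := by
  linear_combination sum_add_sum_compl s f + hf - add_self_eq_zero (∑ i ∈ s, f i)

/-- In characteristic two the constant term `|s| θ³` vanishes and `∑ f² = (∑ f)²`. -/
theorem sum_add_pow_three_of_even_card {ι : Type*} {s : Finset ι} (hs : Even s.card)
    (f : ι → R) (θ : R) :
    ∑ i ∈ s, (f i + θ) ^ 3 = ∑ i ∈ s, f i ^ 3 + θ * (∑ i ∈ s, f i) ^ 2 + θ ^ 2 * ∑ i ∈ s, f i := by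
  have hcard : (s.card : R) = 0 := (CharP.cast_eq_zero_iff R 2 _).2 hs.two_dvd
  have hexpand : ∀ x : R, (x + θ) ^ 3 = x ^ 3 + θ * x ^ 2 + θ ^ 2 * x + θ ^ 3 := fun x => by
    linear_combination (x * θ ^ 2 + x ^ 2 * θ) * two_eq_zero (R := R)
  simp only [hexpand, sum_add_distrib, sum_const, nsmul_eq_mul, hcard, zero_mul, add_zero]
  rw [← mul_sum, ← mul_sum, sum_sq]

end CommRing

theorem even_card_symmDiff {ι : Type*} [DecidableEq ι] {s t : Finset ι} (hs : Even s.card)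
    (ht : Even t.card) : Even (s ∆ t).card := by
  rw [← ZMod.natCast_eq_zero_iff_even] at hs ht ⊢
  rw [cast_card, sum_symmDiff, ← cast_card, ← cast_card, hs, ht, add_zero]

section Field

variable {K : Type*} [Field K] [CharP K 2]

theorem card_ne_two_of_sum_eq_zero [DecidableEq K] {s : Finset K} (h : ∑ x ∈ s, x = 0) :
    s.card ≠ 2 := by
  intro hs
  obtain ⟨a, b, hab, rfl⟩ := card_eq_two.1 hs
  rw [sum_pair hab, CharTwo.add_eq_zero] at h
  exact hab h

/-- If `a + b + c + d = 0` then `a³ + b³ + c³ + d³ = (a + b)(a + c)(a + d)`. -/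
theorem sum_pow_three_ne_zero_of_card_eq_four [DecidableEq K] {s : Finset K} (hs : s.card = 4)
    (h : ∑ x ∈ s, x = 0) : ∑ x ∈ s, x ^ 3 ≠ 0 := by
  obtain ⟨a, b, c, d, hab, hac, had, hbc, hbd, hcd, rfl⟩ := card_eq_four.1 hs
  have hmem : a ∉ ({b, c, d} : Finset K) ∧ b ∉ ({c, d} : Finset K) ∧ c ∉ ({d} : Finset K) := by
    simp [*]
  rw [sum_insert hmem.1, sum_insert hmem.2.1, sum_insert hmem.2.2, sum_singleton] at h ⊢
  have hd : d = a + b + c := by linear_combination h - (a + b + c) * two_eq_zero (R := K)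
  subst hd
  have hne : ∀ {x y : K}, x ≠ y → x + y ≠ 0 := fun hxy hsum => hxy (CharTwo.add_eq_zero.1 hsum)
  intro h3
  have : (a + b) * (a + c) * (b + c) = 0 := by
    linear_combination h3 - (a ^ 2 * b + a ^ 2 * c + a * b ^ 2 + a * c ^ 2 + b ^ 2 * c
      + b * c ^ 2 + a ^ 3 + b ^ 3 + c ^ 3 + 2 * a * b * c) * two_eq_zero (R := K)
  simp only [mul_eq_zero] at this
  exact this.elim (·.elim (hne hab) (hne hac)) (hne hbc)

theorem shifted_cube_sums_eq_zero_iff {β γ S T : K} (h : β ≠ γ) :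
    (T + β * S ^ 2 + β ^ 2 * S = 0 ∧ T + γ * S ^ 2 + γ ^ 2 * S = 0) ↔
      (S = 0 ∧ T = 0 ∨ S = β + γ ∧ T = β * γ * (β + γ)) := by
  have hδ : β + γ ≠ 0 := fun h' => h (CharTwo.add_eq_zero.1 h')
  constructor
  · rintro ⟨hβ, hγ⟩
    have : (β + γ) * (S * (S + (β + γ))) = 0 := by
      linear_combination hβ + hγ + (β * γ * S - T) * two_eq_zero (R := K)
    rcases (mul_eq_zero.1 this).resolve_left hδ |> mul_eq_zero.1 with hS | hS
    · exact .inl ⟨hS, by linear_combination hβ - (β * S + β ^ 2) * hS⟩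
    · have hS' : S = β + γ := by linear_combination hS - (β + γ) * two_eq_zero (R := K)
      refine .inr ⟨hS', ?_⟩
      linear_combination hβ - (β * (S + (β + γ)) + β ^ 2) * hS'
        - β * (β + γ) ^ 2 * two_eq_zero (R := K)
  · rintro (⟨rfl, rfl⟩ | ⟨rfl, rfl⟩)
    · simp
    · constructor
      · linear_combination (β * γ ^ 2 + 2 * β ^ 2 * γ + β ^ 3) * two_eq_zero (R := K)
      · linear_combination (γ ^ 3 + 2 * β * γ ^ 2 + β ^ 2 * γ) * two_eq_zero (R := K)

end Field

end CharTwo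

theorem Finset.even_card_compl {α : Type*} [Fintype α] [DecidableEq α] {s : Finset α}
    (hα : Even (Fintype.card α)) (hs : Even s.card) : Even sᶜ.card := by
  rw [card_compl]
  exact (Nat.even_sub (card_le_univ s)).2 (iff_of_true hα hs)

theorem FiniteField.pow_injective_of_coprime {K : Type*} [Field K] [Fintype K] {n : ℕ}
    (hn : n ≠ 0) (h : n.Coprime (Fintype.card K - 1)) : Function.Injective fun x : K => x ^ n := by
  intro x y hxy
  simp only at hxy
  rcases eq_or_ne y 0 with rfl | hy
  · rwa [zero_pow hn, pow_eq_zero_iff hn] at hxy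
  have hratio : (x / y) ^ n.gcd (Fintype.card K - 1) = 1 := by
    refine pow_gcd_eq_one.2 ⟨by rw [div_pow, hxy, div_self (pow_ne_zero n hy)], ?_⟩
    refine FiniteField.pow_card_sub_one_eq_one _ (div_ne_zero ?_ hy)
    rintro rfl
    rw [zero_pow hn, eq_comm, pow_eq_zero_iff hn] at hxy
    exact hy hxy
  rwa [h, pow_one, div_eq_one_iff_eq hy] at hratio

namespace FieldOfCardEight

variable {K : Type*} [Field K] [Fintype K]

theorem pow_three_bijective (hK : Fintype.card K = 8) : Function.Bijective fun x : K => x ^ 3 :=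
  Finite.injective_iff_bijective.1 <|
    FiniteField.pow_injective_of_coprime three_ne_zero (by rw [hK]; decide)

variable [CharP K 2]

/-- `GF(8)` contains no primitive cube root of unity. -/
theorem sq_add_self_add_one_ne_zero (hK : Fintype.card K = 8) (t : K) : t ^ 2 + t + 1 ≠ 0 := by
  intro h
  have ht : t = 1 := (pow_three_bijective hK).1 <| show t ^ 3 = 1 ^ 3 by
    linear_combination (t + 1) * h - (t ^ 2 + t + 1) * CharTwo.two_eq_zero (R := K)
  rw [ht] at h
  exact one_ne_zero (by linear_combination h - CharTwo.two_eq_zero (R := K))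

variable [DecidableEq K]

theorem sum_compl_pow (hK : Fintype.card K = 8) (s : Finset K) {i : ℕ} (hi : i < 7) :
    ∑ x ∈ sᶜ, x ^ i = ∑ x ∈ s, x ^ i :=
  CharTwo.sum_compl s (FiniteField.sum_pow_lt_card_sub_one K i (by rwa [hK]))

theorem sum_compl (hK : Fintype.card K = 8) (s : Finset K) : ∑ x ∈ sᶜ, x = ∑ x ∈ s, x := by
  simpa only [pow_one] using sum_compl_pow hK s (i := 1) (by norm_num)

/-- Weights 2 and 4 are excluded directly, weight 6 by passing to the complement. -/
theorem eq_empty_or_eq_univ_of_sum_eq_zero (hK : Fintype.card K = 8) {s : Finset K}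
    (hs : Even s.card) (h1 : ∑ x ∈ s, x = 0) (h3 : ∑ x ∈ s, x ^ 3 = 0) : s = ∅ ∨ s = univ := by
  have hle : s.card ≤ 8 := hK ▸ card_le_univ s
  obtain ⟨k, hk⟩ := hs
  have hcompl_ne_two : sᶜ.card ≠ 2 :=
    CharTwo.card_ne_two_of_sum_eq_zero (by rw [sum_compl hK, h1])
  rw [card_compl, hK] at hcompl_ne_two
  have hne_two := CharTwo.card_ne_two_of_sum_eq_zero h1
  have hne_four : s.card ≠ 4 := fun h4 => CharTwo.sum_pow_three_ne_zero_of_card_eq_four h4 h1 h3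
  obtain h | h : s.card = 0 ∨ s.card = 8 := by omega
  · exact .inl (card_eq_zero.1 h)
  · exact .inr (eq_univ_of_card s (h.trans hK.symm))

theorem even_card_and_power_sums_eq_iff (hK : Fintype.card K = 8) {s t : Finset K}
    (ht : Even t.card) :
    (Even s.card ∧ ∑ x ∈ s, x = ∑ x ∈ t, x ∧ ∑ x ∈ s, x ^ 3 = ∑ x ∈ t, x ^ 3) ↔
      s = t ∨ s = tᶜ := by
  constructor
  · rintro ⟨hs, h1, h3⟩
    have hsymm := eq_empty_or_eq_univ_of_sum_eq_zero hK (CharTwo.even_card_symmDiff hs ht)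
      (by rw [CharTwo.sum_symmDiff, h1, CharTwo.add_self_eq_zero])
      (by rw [CharTwo.sum_symmDiff, h3, CharTwo.add_self_eq_zero])
    refine hsymm.imp (fun h => symmDiff_eq_bot.1 h) fun h => ?_
    rw [← symmDiff_symmDiff_cancel_right t s, h, symmDiff_comm]
    exact symmDiff_top t
  · rintro (rfl | rfl)
    · exact ⟨ht, rfl, rfl⟩
    · exact ⟨Finset.even_card_compl (hK ▸ by decide) ht, sum_compl hK t,
        sum_compl_pow hK t (by norm_num)⟩

/-- Pick `b ∉ {0, 1}` and rescale `(1, b)` by a cube root of `(b (1 + b))⁻¹`. -/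
theorem exists_mul_mul_add_eq_one (hK : Fintype.card K = 8) : ∃ a b : K, a * b * (a + b) = 1 := by
  obtain ⟨b, -, hb⟩ := exists_mem_notMem_of_card_lt_card (s := ({0, 1} : Finset K)) (t := univ)
    (by rw [card_univ, hK]; exact card_le_two.trans_lt (by norm_num))
  simp only [mem_insert, mem_singleton, not_or] at hb
  have hb1 : 1 + b ≠ 0 := fun h => hb.2 (CharTwo.add_eq_zero.1 h).symm
  obtain ⟨r, hr⟩ : ∃ r : K, r ^ 3 = (b * (1 + b))⁻¹ := (pow_three_bijective hK).2 _
  refine ⟨r, r * b, ?_⟩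
  calc r * (r * b) * (r + r * b) = r ^ 3 * (b * (1 + b)) := by ring
    _ = 1 := by rw [hr, inv_mul_cancel₀ (mul_ne_zero hb.1 hb1)]

theorem exists_card_four_sum_eq_one_sum_pow_three_eq_zero (hK : Fintype.card K = 8) :
    ∃ T : Finset K, T.card = 4 ∧ 1 ∈ T ∧ 0 ∉ T ∧ ∑ t ∈ T, t = 1 ∧ ∑ t ∈ T, t ^ 3 = 0 := by
  obtain ⟨a, b, h⟩ := exists_mul_mul_add_eq_one hK
  have h2 := CharTwo.two_eq_zero (R := K)
  have hab0 : a * b ≠ 0 := left_ne_zero_of_mul_eq_one h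
  have ha0 : a ≠ 0 := left_ne_zero_of_mul hab0
  have hb0 : b ≠ 0 := right_ne_zero_of_mul hab0
  have hsum0 : a + b ≠ 0 := right_ne_zero_of_mul_eq_one h
  have hroot := sq_add_self_add_one_ne_zero hK
  have h1a : 1 ≠ a := by
    rintro rfl
    exact hroot b (by linear_combination h + h2)
  have h1b : 1 ≠ b := by
    rintro rfl
    exact hroot a (by linear_combination h + h2)
  have h1ab : 1 ≠ a + b := fun h1 =>
    hroot a (by linear_combination -h - (a + a * b) * h1 + a * h2)
  have hab : a ≠ b := fun h' => hsum0 (CharTwo.add_eq_zero.2 h')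
  have haab : a ≠ a + b := fun h' => hb0 (by linear_combination -h')
  have hbab : b ≠ a + b := fun h' => ha0 (by linear_combination -h')
  have hmem : 1 ∉ ({a, b, a + b} : Finset K) ∧ a ∉ ({b, a + b} : Finset K) ∧
      b ∉ ({a + b} : Finset K) := by
    simp [h1a, h1b, h1ab, hab, haab, hbab]
  refine ⟨{1, a, b, a + b}, card_eq_four.2 ⟨1, a, b, a + b, h1a, h1b, h1ab, hab, haab, hbab, rfl⟩,
    mem_insert_self 1 _, by simp [ha0.symm, hb0.symm, hsum0.symm], ?_⟩
  simp only [sum_insert hmem.1, sum_insert hmem.2.1, sum_insert hmem.2.2, sum_singleton]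
  constructor
  · linear_combination (a + b) * h2
  · linear_combination h + (1 + a ^ 2 * b + a * b ^ 2 + a ^ 3 + b ^ 3) * h2

theorem exists_card_four_sum_eq_add_sum_pow_three_eq (hK : Fintype.card K = 8) {β γ : K}
    (h : β ≠ γ) : ∃ P : Finset K, P.card = 4 ∧ β ∈ P ∧ γ ∉ P ∧
      ∑ x ∈ P, x = β + γ ∧ ∑ x ∈ P, x ^ 3 = β * γ * (β + γ) := by
  obtain ⟨T, hcard, h1, h0, hsum, hcube⟩ := exists_card_four_sum_eq_one_sum_pow_three_eq_zero hK
  have h2 := CharTwo.two_eq_zero (R := K)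
  have hδ : β + γ ≠ 0 := fun h' => h (CharTwo.add_eq_zero.1 h')
  have he : Function.Injective fun t : K => (β + γ) * t + γ :=
    fun s t hst => mul_left_cancel₀ hδ (add_right_cancel hst)
  let e : K ↪ K := ⟨_, he⟩
  have hT : Even T.card := by rw [hcard]; decide
  refine ⟨T.map e, by rw [card_map, hcard], mem_map.2 ⟨1, h1, ?_⟩, ?_, ?_, ?_⟩
  · change (β + γ) * 1 + γ = β
    linear_combination γ * h2
  · intro hγ
    obtain ⟨t, ht, hγ⟩ := mem_map.1 hγ
    have : (β + γ) * t = 0 := add_eq_right.1 hγ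
    exact h0 (((mul_eq_zero.1 this).resolve_left hδ) ▸ ht)
  · simp only [sum_map, e, Function.Embedding.coeFn_mk, sum_add_distrib, sum_const, hcard]
    rw [← mul_sum, hsum]
    linear_combination 2 * γ * h2
  · simp only [sum_map, e, Function.Embedding.coeFn_mk]
    rw [CharTwo.sum_add_pow_three_of_even_card hT]
    simp only [mul_pow]
    rw [← mul_sum, ← mul_sum, hsum, hcube]
    linear_combination (β * γ ^ 2 + γ ^ 3) * h2

end FieldOfCardEight

theorem GaloisField.card_two_three : Fintype.card (GaloisField 2 3) = 8 := by
  rw [← Nat.card_eq_fintype_card, GaloisField.card 2 3 three_ne_zero]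
  norm_num

theorem mem_HbarGF8_iff {θ : GaloisField 2 3} {X : Finset (GaloisField 2 3)} :
    X ∈ HbarGF8 θ ↔
      Even X.card ∧ ∑ x ∈ X, x ^ 3 + θ * (∑ x ∈ X, x) ^ 2 + θ ^ 2 * ∑ x ∈ X, x = 0 :=
  and_congr_right fun hX => by rw [CharTwo.sum_add_pow_three_of_even_card hX (fun x => x)]

theorem stmt_2 (β γ : GaloisField 2 3) (hβγ : β ≠ γ) :
    ∃ P0 P1 : Finset (GaloisField 2 3),
      P0.card = 4 ∧ P1.card = 4 ∧ P0 ∪ P1 = Finset.univ ∧ P0 ∩ P1 = ∅ ∧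
      β ∈ P0 ∧ γ ∈ P1 ∧
      HbarGF8 β ∩ HbarGF8 γ = {(∅ : Finset (GaloisField 2 3)), Finset.univ, P0, P1} := by
  have hK := GaloisField.card_two_three
  obtain ⟨P, hcard, hβ, hγ, hsum, hcube⟩ :=
    FieldOfCardEight.exists_card_four_sum_eq_add_sum_pow_three_eq hK hβγ
  refine ⟨P, Pᶜ, hcard, by rw [card_compl, hK, hcard], union_compl P, inter_compl P, hβ,
    mem_compl.2 hγ, ?_⟩
  ext X
  have hempty := FieldOfCardEight.even_card_and_power_sums_eq_iff hK (s := X) (t := ∅) (by simp)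
  have hP := FieldOfCardEight.even_card_and_power_sums_eq_iff hK (s := X) (by rw [hcard]; decide)
  rw [sum_empty, sum_empty, compl_empty] at hempty
  rw [hsum, hcube] at hP
  rw [Set.mem_inter_iff, mem_HbarGF8_iff, mem_HbarGF8_iff, and_and_and_comm, and_self,
    CharTwo.shifted_cube_sums_eq_zero_iff hβγ]
  simp only [Set.mem_insert_iff, Set.mem_singleton_iff, and_or_left, hempty, hP, or_assoc]
end

section
/- Let n = 2^m with m ≥ 2, let P = (C_l)_{l∈L} be a family of pairwise disjoint extended perfect binary codes of length n whose union is the set of all odd-weight words of F_2^n, let π be a permutation of the index set L, and let D_P = ∪_{l∈L} C_l × C_{π(l)} ⊆ F_2^n × F_2^n be the corresponding Solov'eva code of length 2n (with distance d((X,Y),(X',Y')) = d(X,X') + d(Y,Y')). Let (X,Y) ∈ C_k × C_{π(k)}, let i ≠ j be two coordinates of the first block, and let l ∈ L be the index with X + e_i + e_j ∈ C_l. Then N_{ij}(D_P,(X,Y)) = (N_{ij}(C_k,X) × {Y}) ∪ {(X + e_i + e_j, Z) : Z ∈ C_{π(l)}, d(Z,Y) = 2}. -/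
/-- `C` is an extended perfect binary code of length `n = 2^m`:
`|C| = 2^n / (2n)`, all codewords have the same weight parity,
and distinct codewords are at Hamming distance at least 4. -/
def IsExtendedPerfectCode (n : ℕ) (C : Set (Fin n → ZMod 2)) : Prop :=
  C.ncard = 2 ^ n / (2 * n) ∧
  (∀ c ∈ C, ∀ c' ∈ C, hammingNorm c % 2 = hammingNorm c' % 2) ∧
  (∀ c ∈ C, ∀ c' ∈ C, c ≠ c' → 4 ≤ hammingDist c c')

/-- The unit vector `e i`. -/
def unitVec (n : ℕ) (i : Fin n) : Fin n → ZMod 2 := Pi.single i 1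

/-- `ij`-adjacent codewords of a code `C` of length `n`: at Hamming distance 4,
differing in both coordinates `i` and `j`. -/
def Nset (n : ℕ) (C : Set (Fin n → ZMod 2)) (i j : Fin n) (X : Fin n → ZMod 2) :
    Set (Fin n → ZMod 2) :=
  {Z ∈ C | hammingDist X Z = 4 ∧ Z i ≠ X i ∧ Z j ≠ X j}

/-- The Solov'eva code `D_P = ∪_l C_l × C_{π(l)}`. -/
def SolovevaCode {L : Type*} (n : ℕ) (C : L → Set (Fin n → ZMod 2)) (π : Equiv.Perm L) :
    Set ((Fin n → ZMod 2) × (Fin n → ZMod 2)) :=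
  ⋃ l, (C l) ×ˢ (C (π l))

/-- `ij`-adjacent codewords of the pair code `D` (with `i`,`j` coordinates of the
first block): at distance 4 (sum of the two Hamming distances) and differing from the
given codeword in both coordinates `i` and `j` of the first block. -/
def NsetPair (n : ℕ) (D : Set ((Fin n → ZMod 2) × (Fin n → ZMod 2))) (i j : Fin n)
    (c : (Fin n → ZMod 2) × (Fin n → ZMod 2)) :
    Set ((Fin n → ZMod 2) × (Fin n → ZMod 2)) :=
  {c' ∈ D | hammingDist c.1 c'.1 + hammingDist c.2 c'.2 = 4 ∧
    c'.1 i ≠ c.1 i ∧ c'.1 j ≠ c.1 j}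


/-!
All words of the partition are odd, so Hamming distances inside either block are even.
A neighbour `(Z, W)` of `(X, Y)` at distance 4 that differs from `X` at `i` and `j` therefore
has `d(X, Z) ∈ {2, 4}`. If it is 2, then `Z = X + e_i + e_j ∈ C_l`, so disjointness puts `W` in
`C_{π l}` at distance 2 from `Y`. If it is 4, then `W = Y ∈ C_{π k}`, so disjointness puts `Z`
in `C_k`.
-/

section HammingZModTwo

variable {ι : Type*} [Fintype ι]

theorem natCast_hammingNorm_zmod_two (v : ι → ZMod 2) :
    (hammingNorm v : ZMod 2) = ∑ t, v t := by
  have h : ∀ a : ZMod 2, a = if a ≠ 0 then 1 else 0 := by decide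
  rw [Finset.sum_congr rfl fun t _ => h (v t), Finset.sum_boole]
  rfl

theorem natCast_hammingDist_zmod_two (x y : ι → ZMod 2) :
    (hammingDist x y : ZMod 2) = hammingNorm x + hammingNorm y := by
  rw [hammingDist_eq_hammingNorm, natCast_hammingNorm_zmod_two, natCast_hammingNorm_zmod_two,
    natCast_hammingNorm_zmod_two]
  simp only [Pi.add_apply, Pi.neg_apply, Finset.sum_add_distrib, CharTwo.neg_eq]

theorem even_hammingDist_of_odd {x y : ι → ZMod 2} (hx : Odd (hammingNorm x))
    (hy : Odd (hammingNorm y)) : Even (hammingDist x y) := by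
  rw [← ZMod.natCast_eq_zero_iff_even, natCast_hammingDist_zmod_two,
    (ZMod.natCast_eq_one_iff_odd).2 hx, (ZMod.natCast_eq_one_iff_odd).2 hy]
  rfl

theorem pair_subset_filter_ne [DecidableEq ι] {x y : ι → ZMod 2} {i j : ι} (hi : y i ≠ x i)
    (hj : y j ≠ x j) :
    {i, j} ⊆ Finset.univ.filter fun t => x t ≠ y t := by
  simp [Finset.insert_subset_iff, hi.symm, hj.symm]

theorem two_le_hammingDist_of_ne_of_ne [DecidableEq ι] {x y : ι → ZMod 2} {i j : ι}
    (hij : i ≠ j) (hi : y i ≠ x i) (hj : y j ≠ x j) : 2 ≤ hammingDist x y :=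
  (Finset.card_pair hij).symm.le.trans (Finset.card_le_card (pair_subset_filter_ne hi hj))

theorem hammingDist_add_single_add_single [DecidableEq ι] (x : ι → ZMod 2) {i j : ι}
    (hij : i ≠ j) :
    hammingDist x (x + Pi.single i 1 + Pi.single j 1) = 2 := by
  have : (Finset.univ.filter fun t =>
      x t ≠ (x + Pi.single i 1 + Pi.single j 1 : ι → ZMod 2) t) = {i, j} := by
    ext t
    by_cases hti : t = i <;> by_cases htj : t = j <;> simp_all
  rw [hammingDist, this, Finset.card_pair hij]

theorem eq_add_single_add_single_of_hammingDist_eq_two [DecidableEq ι] {x y : ι → ZMod 2}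
    {i j : ι} (hij : i ≠ j) (hi : y i ≠ x i) (hj : y j ≠ x j) (hd : hammingDist x y = 2) :
    y = x + Pi.single i 1 + Pi.single j 1 := by
  have hsupp := (Finset.eq_of_subset_of_card_le (pair_subset_filter_ne hi hj)
    (by rw [Finset.card_pair hij]; exact hd.le)).symm
  have hne : ∀ a b : ZMod 2, a ≠ b → a = b + 1 := by decide
  funext t
  by_cases hti : t = i
  · subst hti; simp [hij, hne _ _ hi]
  by_cases htj : t = j
  · subst htj; simp [hti, hne _ _ hj]
  have hnot : t ∉ Finset.univ.filter fun t => x t ≠ y t := by simp [hsupp, hti, htj]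
  have : x t = y t := by simpa using hnot
  simp [hti, htj, this]

end HammingZModTwo

section SolovevaCode

variable {L : Type*} {n : ℕ} {C : L → Set (Fin n → ZMod 2)} {π : Equiv.Perm L}

theorem mk_mem_solovevaCode_iff {x y : Fin n → ZMod 2} :
    (x, y) ∈ SolovevaCode n C π ↔ ∃ t, x ∈ C t ∧ y ∈ C (π t) := by
  simp [SolovevaCode]

theorem nsetPair_solovevaCode_subset (hdisj : ∀ l l', l ≠ l' → Disjoint (C l) (C l'))
    (hodd : ∀ t, ∀ v ∈ C t, Odd (hammingNorm v)) {k l : L} {X Y : Fin n → ZMod 2}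
    (hX : X ∈ C k) (hY : Y ∈ C (π k)) {i j : Fin n} (hij : i ≠ j)
    (hl : X + unitVec n i + unitVec n j ∈ C l) :
    NsetPair n (SolovevaCode n C π) i j (X, Y) ⊆
      ((fun Z => (Z, Y)) '' Nset n (C k) i j X) ∪
      {p | p.1 = X + unitVec n i + unitVec n j ∧ p.2 ∈ C (π l) ∧ hammingDist p.2 Y = 2} := by
  have index_eq {t t' : L} {v : Fin n → ZMod 2} (h : v ∈ C t) (h' : v ∈ C t') : t = t' :=
    by_contra fun hne => Set.disjoint_left.1 (hdisj _ _ hne) h h'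
  rintro ⟨Z, W⟩ ⟨hZW, hd, hi, hj⟩
  dsimp only at hd hi hj
  obtain ⟨t, hZ, hW⟩ := mk_mem_solovevaCode_iff.1 hZW
  have hXZ := Nat.even_iff.1 (even_hammingDist_of_odd (hodd k X hX) (hodd t Z hZ))
  have hYW := Nat.even_iff.1 (even_hammingDist_of_odd (hodd _ Y hY) (hodd _ W hW))
  have h2 := two_le_hammingDist_of_ne_of_ne hij hi hj
  obtain hXZ2 | hXZ4 : hammingDist X Z = 2 ∨ hammingDist X Z = 4 := by omega
  · have hZ' : Z = X + unitVec n i + unitVec n j :=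
      eq_add_single_add_single_of_hammingDist_eq_two hij hi hj hXZ2
    obtain rfl := index_eq hZ (hZ' ▸ hl)
    refine Or.inr ⟨hZ', hW, ?_⟩
    dsimp only
    rw [hammingDist_comm]; omega
  · have hWY : W = Y := (hammingDist_eq_zero.1 (by omega)).symm
    obtain rfl := π.injective (index_eq hW (hWY ▸ hY))
    exact Or.inl ⟨Z, ⟨hZ, hXZ4, hi, hj⟩, by rw [hWY]⟩

theorem subset_nsetPair_solovevaCode {k l : L} {X Y : Fin n → ZMod 2} (hY : Y ∈ C (π k))
    {i j : Fin n} (hij : i ≠ j) (hl : X + unitVec n i + unitVec n j ∈ C l) :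
    ((fun Z => (Z, Y)) '' Nset n (C k) i j X) ∪
        {p | p.1 = X + unitVec n i + unitVec n j ∧ p.2 ∈ C (π l) ∧ hammingDist p.2 Y = 2} ⊆
      NsetPair n (SolovevaCode n C π) i j (X, Y) := by
  rintro p (⟨Z, ⟨hZ, hd, hi, hj⟩, rfl⟩ | ⟨hp, hW, hd⟩)
  · exact ⟨mk_mem_solovevaCode_iff.2 ⟨k, hZ, hY⟩, by simp [hd], hi, hj⟩
  · obtain ⟨Z, W⟩ := p
    dsimp only at hp hW hd
    subst hp
    refine ⟨mk_mem_solovevaCode_iff.2 ⟨l, hl, hW⟩, ?_, ?_, ?_⟩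
    · dsimp only
      rw [unitVec, unitVec, hammingDist_add_single_add_single X hij, hammingDist_comm, hd]
    · simp [unitVec, hij]
    · simp [unitVec, hij.symm]

end SolovevaCode

theorem stmt_4_general {L : Type*} (n : ℕ)
    (C : L → Set (Fin n → ZMod 2))
    (hdisj : ∀ l l', l ≠ l' → Disjoint (C l) (C l'))
    (hunion : (⋃ l, C l) = {v | Odd (hammingNorm v)})
    (π : Equiv.Perm L) (k l : L)
    (X Y : Fin n → ZMod 2) (hX : X ∈ C k) (hY : Y ∈ C (π k))
    (i j : Fin n) (hij : i ≠ j)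
    (hl : X + unitVec n i + unitVec n j ∈ C l) :
    NsetPair n (SolovevaCode n C π) i j (X, Y) =
      ((fun Z => (Z, Y)) '' Nset n (C k) i j X) ∪
      {p | p.1 = X + unitVec n i + unitVec n j ∧ p.2 ∈ C (π l) ∧ hammingDist p.2 Y = 2} := by
  have hodd : ∀ t, ∀ v ∈ C t, Odd (hammingNorm v) := fun t v hv =>
    (Set.ext_iff.1 hunion v).1 (Set.mem_iUnion_of_mem t hv)
  exact (nsetPair_solovevaCode_subset hdisj hodd hX hY hij hl).antisymm
    (subset_nsetPair_solovevaCode hY hij hl)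

theorem stmt_4 {L : Type*} (m n : ℕ) (hm : 2 ≤ m) (hn : n = 2 ^ m)
    (C : L → Set (Fin n → ZMod 2))
    (hperf : ∀ l, IsExtendedPerfectCode n (C l))
    (hdisj : ∀ l l', l ≠ l' → Disjoint (C l) (C l'))
    (hunion : (⋃ l, C l) = {v | Odd (hammingNorm v)})
    (π : Equiv.Perm L) (k l : L)
    (X Y : Fin n → ZMod 2) (hX : X ∈ C k) (hY : Y ∈ C (π k))
    (i j : Fin n) (hij : i ≠ j)
    (hl : X + unitVec n i + unitVec n j ∈ C l) :
    NsetPair n (SolovevaCode n C π) i j (X, Y) =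
      ((fun Z => (Z, Y)) '' Nset n (C k) i j X) ∪
      {p | p.1 = X + unitVec n i + unitVec n j ∧ p.2 ∈ C (π l) ∧ hammingDist p.2 Y = 2} :=
  stmt_4_general n C hdisj hunion π k l X Y hX hY i j hij hl
end

section
/- Let F = GF(8) and let β, γ ∈ F with β ≠ γ. Every coset of the subgroup H̄_β ∩ H̄_γ (under symmetric difference) inside H̄_β contains a representative X with |X| ≤ 4 that belongs to the (β,γ)-component of the empty set (zero codeword) in the code H̄_β. -/
open scoped symmDiff

/-- The even-weight code `H̄_β`: subsets `X` of `GF(8)` with `|X|` even and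
`∑_{x ∈ X} (x + β)^3 = 0`. -/
def Hbar (β : GaloisField 2 3) : Set (Finset (GaloisField 2 3)) :=
  {X | Even X.card ∧ ∑ x ∈ X, (x + β) ^ 3 = 0}

/-- `(β,γ)`-adjacency in a code `C` of subsets of `GF(8)`: both codewords in `C`,
symmetric difference of size 4 containing both `β` and `γ`. -/
def AdjBG (C : Set (Finset (GaloisField 2 3))) (β γ : GaloisField 2 3)
    (A B : Finset (GaloisField 2 3)) : Prop :=
  A ∈ C ∧ B ∈ C ∧ (A ∆ B).card = 4 ∧ β ∈ A ∆ B ∧ γ ∈ A ∆ B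

namespace Stmt6Aux

local notation "F8" => GaloisField 2 3

lemma two_zero : (2 : F8) = 0 := by
  have : (2 : ℕ) = 2 := rfl
  exact_mod_cast (CharP.cast_eq_zero F8 2)

lemma card_F8 : Fintype.card F8 = 8 := by
  have h := GaloisField.card 2 3 (by norm_num)
  rw [← Nat.card_eq_fintype_card]
  simpa using h

lemma pow8 (x : F8) : x ^ 8 = x := by
  have h := FiniteField.pow_card x
  rwa [card_F8] at h

lemma pow7 {x : F8} (hx : x ≠ 0) : x ^ 7 = 1 := by
  have h := FiniteField.pow_card_sub_one_eq_one x hx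
  rwa [card_F8] at h

lemma sum_symmDiff2 (A B : Finset F8) (f : F8 → F8) :
    ∑ x ∈ A ∆ B, f x = ∑ x ∈ A, f x + ∑ x ∈ B, f x := by
  classical
  have hAB : A ∆ B = (A \ B) ∪ (B \ A) := by
    rw [symmDiff_def, Finset.sup_eq_union]
  have h1 : ∑ x ∈ A ∆ B, f x = ∑ x ∈ A \ B, f x + ∑ x ∈ B \ A, f x := by
    rw [hAB, Finset.sum_union disjoint_sdiff_sdiff]
  have h2 : ∑ x ∈ A \ B, f x + ∑ x ∈ A ∩ B, f x = ∑ x ∈ A, f x := by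
    rw [← Finset.sdiff_inter_self_left A B, Finset.sum_sdiff_eq_sub Finset.inter_subset_left]
    ring
  have h3 : ∑ x ∈ B \ A, f x + ∑ x ∈ B ∩ A, f x = ∑ x ∈ B, f x := by
    rw [← Finset.sdiff_inter_self_left B A, Finset.sum_sdiff_eq_sub Finset.inter_subset_left]
    ring
  have h4 : ∑ x ∈ A ∩ B, f x = ∑ x ∈ B ∩ A, f x := by rw [Finset.inter_comm]
  rw [h1, ← h2, ← h3, h4]
  linear_combination (-(∑ x ∈ B ∩ A, f x)) * two_zero

lemma even_card_symmDiff {A B : Finset F8} (hA : Even A.card) (hB : Even B.card) :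
    Even (A ∆ B).card := by
  classical
  have hAB : A ∆ B = (A \ B) ∪ (B \ A) := by
    rw [symmDiff_def, Finset.sup_eq_union]
  have h1 : (A ∆ B).card = (A \ B).card + (B \ A).card := by
    rw [hAB, Finset.card_union_of_disjoint disjoint_sdiff_sdiff]
  have h2 := Finset.card_sdiff_add_card_inter A B
  have h3 := Finset.card_sdiff_add_card_inter B A
  have h4 : (A ∩ B).card = (B ∩ A).card := by rw [Finset.inter_comm]
  rw [Nat.even_iff] at hA hB ⊢
  omega

lemma even_smul_zero {n : ℕ} (hn : Even n) (c : F8) : n • c = 0 := by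
  obtain ⟨m, rfl⟩ := hn
  have : (m + m) • c = m • c + m • c := add_smul m m c
  rw [this, CharTwo.add_self_eq_zero]

/-- If `Y ∈ H̄_β` and `∑_{x∈Y}(x+β)` is `0` or `β+γ`, then `Y ∈ H̄_γ`. -/
lemma Hbar_mem_of_sum (β γ : F8) (Y : Finset F8) (hY : Y ∈ Hbar β)
    (hs : (∑ x ∈ Y, (x + β)) = 0 ∨ (∑ x ∈ Y, (x + β)) = β + γ) : Y ∈ Hbar γ := by
  obtain ⟨hev, hsum⟩ := hY
  refine ⟨hev, ?_⟩
  have hpt : ∀ x ∈ Y, (x + γ) ^ 3 =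
      (x + β) ^ 3 + (β + γ) * (x + β) ^ 2 + (β + γ) ^ 2 * (x + β) + (β + γ) ^ 3 := by
    intro x _
    linear_combination (γ*x^2 + γ^2*x - 2*β*x^2 - 2*β*γ*x - 2*β*γ^2 - 3*β^2*x - 3*β^2*γ - 2*β^3) * two_zero
  have hsq : ∑ x ∈ Y, (x + β) ^ 2 = (∑ x ∈ Y, (x + β)) ^ 2 := by
    exact (sum_pow_char 2 Y (fun x => x + β)).symm
  calc ∑ x ∈ Y, (x + γ) ^ 3
      = ∑ x ∈ Y, ((x + β) ^ 3 + (β + γ) * (x + β) ^ 2 + (β + γ) ^ 2 * (x + β) + (β + γ) ^ 3) :=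
        Finset.sum_congr rfl hpt
    _ = (∑ x ∈ Y, (x + β) ^ 3) + (β + γ) * (∑ x ∈ Y, (x + β) ^ 2)
          + (β + γ) ^ 2 * (∑ x ∈ Y, (x + β)) + Y.card • ((β + γ) ^ 3) := by
        rw [Finset.sum_add_distrib, Finset.sum_add_distrib, Finset.sum_add_distrib,
          ← Finset.mul_sum, ← Finset.mul_sum, Finset.sum_const]
    _ = 0 := by
        rw [hsum, hsq, even_smul_zero hev]
        rcases hs with h | h <;> rw [h]
        · ring
        · linear_combination ((β+γ)^3) * two_zero

/-- One-step construction: a weight-4 codeword of `H̄_β` adjacent to `∅`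
with prescribed `(x+β)`-sum `(1+t)(β+γ)`, for `t ∉ {0,1}` of trace 1. -/
lemma one_step (β γ : F8) (hβγ : β ≠ γ) (t : F8)
    (ht0 : t ≠ 0) (ht1 : t ≠ 1) (htr : t + t ^ 2 + t ^ 4 = 1) :
    ∃ X' ∈ Hbar β, X'.card = 4 ∧ AdjBG (Hbar β) β γ ∅ X' ∧
      (∑ x ∈ X', (x + β)) = (1 + t) * (β + γ) := by
  classical
  have hδ : β + γ ≠ 0 := by
    intro h
    apply hβγ
    linear_combination h - γ * two_zero
  have ht1' : t + 1 ≠ 0 := by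
    intro h
    apply ht1
    linear_combination h - two_zero
  have ht21 : t ^ 2 + t + 1 ≠ 0 := by
    intro h
    apply ht1
    have h7 := pow7 ht0
    linear_combination h7 - (t * (t - 1) * (t ^ 3 + 1)) * h
  set u : F8 := (β + γ) * (t ^ 3 * (t + 1) ^ 2) with hu_def
  set v : F8 := (β + γ) * (t * (t ^ 2 + t + 1) ^ 2) with hv_def
  have hu0 : u ≠ 0 := by
    apply mul_ne_zero hδ
    exact mul_ne_zero (pow_ne_zero 3 ht0) (pow_ne_zero 2 ht1')
  have hv0 : v ≠ 0 := by
    apply mul_ne_zero hδ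
    exact mul_ne_zero ht0 (pow_ne_zero 2 ht21)
  have hcube : u ^ 3 + v ^ 3 = (β + γ) ^ 3 := by
    rw [hu_def, hv_def]
    linear_combination
      (γ^3 + β*γ^2 + β^2*γ + β^3 + t*γ^3 + t*β*γ^2 + t*β^2*γ + t*β^3 + t^4*γ^3 + t^4*β*γ^2
        + t^4*β^2*γ + t^4*β^3 + t^5*γ^3 + t^5*β*γ^2 + t^5*β^2*γ + t^5*β^3 + t^7*γ^3
        + t^7*β*γ^2 + t^7*β^2*γ + t^7*β^3) * htr +
      (-β*γ^2 - β^2*γ - t^2*γ^3 - t^2*β*γ^2 - t^2*β^2*γ - t^2*β^3 + t^3*β*γ^2 + t^3*β^2*γ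
        + 3*t^4*γ^3 + 9*t^4*β*γ^2 + 9*t^4*β^2*γ + 3*t^4*β^3 + 10*t^5*γ^3 + 31*t^5*β*γ^2
        + 31*t^5*β^2*γ + 10*t^5*β^3 + 24*t^6*γ^3 + 74*t^6*β*γ^2 + 74*t^6*β^2*γ + 24*t^6*β^3
        + 45*t^7*γ^3 + 135*t^7*β*γ^2 + 135*t^7*β^2*γ + 45*t^7*β^3 + 62*t^8*γ^3 + 188*t^8*β*γ^2
        + 188*t^8*β^2*γ + 62*t^8*β^3 + 70*t^9*γ^3 + 212*t^9*β*γ^2 + 212*t^9*β^2*γ + 70*t^9*β^3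
        + 66*t^10*γ^3 + 198*t^10*β*γ^2 + 198*t^10*β^2*γ + 66*t^10*β^3 + 52*t^11*γ^3
        + 157*t^11*β*γ^2 + 157*t^11*β^2*γ + 52*t^11*β^3 + 35*t^12*γ^3 + 105*t^12*β*γ^2
        + 105*t^12*β^2*γ + 35*t^12*β^3 + 18*t^13*γ^3 + 54*t^13*β*γ^2 + 54*t^13*β^2*γ
        + 18*t^13*β^3 + 6*t^14*γ^3 + 18*t^14*β*γ^2 + 18*t^14*β^2*γ + 6*t^14*β^3 + t^15*γ^3
        + 3*t^15*β*γ^2 + 3*t^15*β^2*γ + t^15*β^3) * two_zero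
  -- distinctness of the four elements β, γ, β+u, β+v
  have huv : u ≠ v := by
    intro h
    have : (β + γ) * t = 0 := by
      rw [hu_def, hv_def] at h
      linear_combination -h - ((β+γ)*(t^3 + t^2))*two_zero
    exact (mul_ne_zero hδ ht0) this
  have huδ : u ≠ β + γ := by
    intro h
    have hv3 : v ^ 3 = 0 := by
      linear_combination hcube - (u ^ 2 + u * (β + γ) + (β + γ) ^ 2) * h
    exact hv0 ((pow_eq_zero_iff (n := 3) (by norm_num)).mp hv3)
  have hvδ : v ≠ β + γ := by
    intro h
    have hu3 : u ^ 3 = 0 := by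
      linear_combination hcube - (v ^ 2 + v * (β + γ) + (β + γ) ^ 2) * h
    exact hu0 ((pow_eq_zero_iff (n := 3) (by norm_num)).mp hu3)
  have d1 : β ≠ γ := hβγ
  have d2 : β ≠ β + u := fun h => hu0 (left_eq_add.mp h)
  have d3 : β ≠ β + v := fun h => hv0 (left_eq_add.mp h)
  have d4 : γ ≠ β + u := by
    intro h
    apply huδ
    linear_combination -h - β * two_zero
  have d5 : γ ≠ β + v := by
    intro h
    apply hvδ
    linear_combination -h - β * two_zero
  have d6 : β + u ≠ β + v := fun h => huv (by linear_combination h)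
  set X' : Finset F8 := {β, γ, β + u, β + v} with hX'_def
  have m1 : β ∉ ({γ, β + u, β + v} : Finset F8) := by
    simp only [Finset.mem_insert, Finset.mem_singleton]
    push_neg
    exact ⟨d1, d2, d3⟩
  have m2 : γ ∉ ({β + u, β + v} : Finset F8) := by
    simp only [Finset.mem_insert, Finset.mem_singleton]
    push_neg
    exact ⟨d4, d5⟩
  have m3 : β + u ∉ ({β + v} : Finset F8) := by
    simp only [Finset.mem_singleton]
    exact d6
  have hcard : X'.card = 4 := by
    rw [hX'_def]
    rw [Finset.card_insert_of_notMem m1, Finset.card_insert_of_notMem m2,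
      Finset.card_insert_of_notMem m3, Finset.card_singleton]
  have hsum3 : ∑ x ∈ X', (x + β) ^ 3 = 0 := by
    rw [hX'_def, Finset.sum_insert m1, Finset.sum_insert m2, Finset.sum_insert m3,
      Finset.sum_singleton]
    linear_combination hcube +
      (γ^3 + 3*β*γ^2 + 3*β^2*γ + 13*β^3 + 6*t*β^2*γ + 6*t*β^3 + 3*t^2*β*γ^2 + 18*t^2*β^2*γ
        + 15*t^2*β^3 + 12*t^3*β*γ^2 + 48*t^3*β^2*γ + 36*t^3*β^3 + 30*t^4*β*γ^2 + 84*t^4*β^2*γ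
        + 54*t^4*β^3 + 48*t^5*β*γ^2 + 108*t^5*β^2*γ + 60*t^5*β^3 + 60*t^6*β*γ^2 + 120*t^6*β^2*γ
        + 60*t^6*β^3 + 60*t^7*β*γ^2 + 120*t^7*β^2*γ + 60*t^7*β^3 + 48*t^8*β*γ^2 + 96*t^8*β^2*γ
        + 48*t^8*β^3 + 24*t^9*β*γ^2 + 48*t^9*β^2*γ + 24*t^9*β^3 + 6*t^10*β*γ^2 + 12*t^10*β^2*γ
        + 6*t^10*β^3) * two_zero
  have hσ : ∑ x ∈ X', (x + β) = (1 + t) * (β + γ) := by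
    rw [hX'_def, Finset.sum_insert m1, Finset.sum_insert m2, Finset.sum_insert m3,
      Finset.sum_singleton, hu_def, hv_def]
    linear_combination (3*β + t^2*γ + t^2*β + 2*t^3*γ + 2*t^3*β + 2*t^4*γ + 2*t^4*β
      + t^5*γ + t^5*β) * two_zero
  have hX'mem : X' ∈ Hbar β := by
    refine ⟨?_, hsum3⟩
    rw [hcard]
    exact ⟨2, rfl⟩
  have hemp : (∅ : Finset F8) ∈ Hbar β := ⟨by simp, by simp⟩
  have hbs : (∅ : Finset F8) ∆ X' = X' := by
    rw [← Finset.bot_eq_empty, bot_symmDiff]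
  have hβmem : β ∈ X' := by rw [hX'_def]; simp
  have hγmem : γ ∈ X' := by
    rw [hX'_def]
    simp only [Finset.mem_insert, Finset.mem_singleton]
    tauto
  refine ⟨X', hX'mem, hcard, ⟨hemp, hX'mem, ?_, ?_, ?_⟩, hσ⟩
  · rw [hbs]; exact hcard
  · rw [hbs]; exact hβmem
  · rw [hbs]; exact hγmem

end Stmt6Aux

open Stmt6Aux
theorem stmt_6 (β γ : GaloisField 2 3) (hβγ : β ≠ γ)
    (X : Finset (GaloisField 2 3)) (hX : X ∈ Hbar β) :
    ∃ X' ∈ Hbar β, X'.card ≤ 4 ∧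
      Relation.ReflTransGen (AdjBG (Hbar β) β γ) ∅ X' ∧
      X ∆ X' ∈ Hbar β ∩ Hbar γ := by
  classical
  have hδ : β + γ ≠ 0 := by
    intro h
    apply hβγ
    linear_combination h - γ * two_zero
  set s : GaloisField 2 3 := ∑ x ∈ X, (x + β) with hs_def
  by_cases hs0 : s = 0 ∨ s = β + γ
  · -- degenerate case: X itself is in H̄_γ, take X' = ∅
    refine ⟨∅, ⟨by simp, by simp⟩, by simp, Relation.ReflTransGen.refl, ?_⟩
    have hXX : X ∆ (∅ : Finset (GaloisField 2 3)) = X := by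
      rw [← Finset.bot_eq_empty, symmDiff_bot]
    rw [hXX]
    exact ⟨hX, Hbar_mem_of_sum β γ X hX hs0⟩
  push_neg at hs0
  obtain ⟨hsne0, hsneδ⟩ := hs0
  set t0 : GaloisField 2 3 := s * (β + γ)⁻¹ with ht0_def
  have hst : t0 * (β + γ) = s := by
    rw [ht0_def]
    field_simp
  have ht00 : t0 ≠ 0 := by
    intro h
    apply hsne0
    rw [← hst, h, zero_mul]
  have ht01 : t0 ≠ 1 := by
    intro h
    apply hsneδ
    rw [← hst, h, one_mul]
  -- trace dichotomy
  have htr2 : (t0 + t0 ^ 2 + t0 ^ 4) ^ 2 = t0 + t0 ^ 2 + t0 ^ 4 := by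
    linear_combination pow8 t0 + (t0 ^ 3 + t0 ^ 5 + t0 ^ 6) * two_zero
  have htr01 : t0 + t0 ^ 2 + t0 ^ 4 = 0 ∨ t0 + t0 ^ 2 + t0 ^ 4 = 1 := by
    have hmul : (t0 + t0 ^ 2 + t0 ^ 4) * ((t0 + t0 ^ 2 + t0 ^ 4) - 1) = 0 := by
      linear_combination htr2
    rcases mul_eq_zero.mp hmul with h | h
    · exact Or.inl h
    · exact Or.inr (by linear_combination h)
  -- choose t with trace 1
  obtain ⟨t, ht0', ht1', htr, hScase⟩ :
      ∃ t : GaloisField 2 3, t ≠ 0 ∧ t ≠ 1 ∧ t + t ^ 2 + t ^ 4 = 1 ∧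
        (s + (1 + t) * (β + γ) = 0 ∨ s + (1 + t) * (β + γ) = β + γ) := by
    rcases htr01 with h0 | h1
    · refine ⟨t0 + 1, ?_, ?_, ?_, Or.inl ?_⟩
      · intro h
        apply ht01
        linear_combination h - two_zero
      · intro h
        apply ht00
        linear_combination h
      · linear_combination h0 + (1 + 3*t0 + 3*t0^2 + 2*t0^3) * two_zero
      · linear_combination -hst + (t0 * (β + γ) + (β + γ)) * two_zero
    · refine ⟨t0, ht00, ht01, h1, Or.inr ?_⟩
      linear_combination -hst + (t0 * (β + γ)) * two_zero
  obtain ⟨X', hX'mem, hcard4, hadj, hσ'⟩ := one_step β γ hβγ t ht0' ht1' htr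
  have hYβ : X ∆ X' ∈ Hbar β := by
    refine ⟨even_card_symmDiff hX.1 (by rw [hcard4]; exact ⟨2, rfl⟩), ?_⟩
    rw [sum_symmDiff2, hX.2, hX'mem.2, add_zero]
  have hYs : ∑ x ∈ X ∆ X', (x + β) = s + (1 + t) * (β + γ) := by
    rw [sum_symmDiff2, ← hs_def, hσ']
  refine ⟨X', hX'mem, le_of_eq hcard4, Relation.ReflTransGen.single hadj, hYβ, ?_⟩
  exact Hbar_mem_of_sum β γ (X ∆ X') hYβ (by rw [hYs]; exact hScase)
end

section
/- Let F = GF(8), let β ∈ F, and let ρ, σ ∈ F with ρ ≠ σ. Suppose X, X' ∈ H_β satisfy |X Δ X'| = 4 and X' belongs to the (ρ,σ)-component of X in the code H_β. Then there is no λ ∈ F such that both X Δ {ρ,σ} ∈ H_λ and X' Δ {ρ,σ} ∈ H_λ. -/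
open scoped symmDiff

/-- The odd-weight code `H_β`: subsets `X` of `GF(8)` with `|X|` odd and
`∑_{x ∈ X} (x + β)^3 = 0`. -/
def Hodd (β : GaloisField 2 3) : Set (Finset (GaloisField 2 3)) :=
  {X | Odd X.card ∧ ∑ x ∈ X, (x + β) ^ 3 = 0}

/-- `(ρ,σ)`-adjacency in a code `C` of subsets of `GF(8)`: both codewords in `C`,
symmetric difference of size 4 containing both `ρ` and `σ`. -/
def AdjRS (C : Set (Finset (GaloisField 2 3))) (ρ σ : GaloisField 2 3)
    (A B : Finset (GaloisField 2 3)) : Prop :=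
  A ∈ C ∧ B ∈ C ∧ (A ∆ B).card = 4 ∧ ρ ∈ A ∆ B ∧ σ ∈ A ∆ B

namespace Stmt9Aux

abbrev F := GaloisField 2 3

lemma two0 : (2 : F) = 0 := by
  have := CharP.cast_eq_zero F 2
  exact_mod_cast this

lemma pow8 (z : F) : z ^ 8 = z := by
  have h : Fintype.card F = 8 := by
    have := GaloisField.card 2 3 (by norm_num)
    rwa [Nat.card_eq_fintype_card] at this
  calc z ^ 8 = z ^ Fintype.card F := by rw [h]
  _ = z := FiniteField.pow_card z

/-- The absolute trace of `GF(8)` as an explicit polynomial map. -/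
noncomputable def T (z : F) : F := z + z ^ 2 + z ^ 4

lemma Tadd (z w : F) : T (z + w) = T z + T w := by
  unfold T
  linear_combination (z*w + 2*z^3*w + 3*z^2*w^2 + 2*z*w^3) * two0

lemma Tsq (z : F) : T (z ^ 2) = T z := by
  unfold T
  linear_combination pow8 z

lemma T4 (z : F) : T (z ^ 4) = T z := by
  rw [show (z ^ 4 : F) = (z ^ 2) ^ 2 by ring, Tsq, Tsq]

lemma Tzz4 (z : F) : T (z + z ^ 4) = 0 := by
  rw [Tadd, T4]
  linear_combination (T z) * two0

lemma Tzsq (z : F) : T (z + z ^ 2) = 0 := by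
  rw [Tadd, Tsq]
  linear_combination (T z) * two0

lemma Tone : T (1 : F) = 1 := by
  unfold T
  linear_combination two0

lemma Tzero : T (0 : F) = 0 := by
  unfold T; ring

lemma add_ne (a b : F) (h : a ≠ b) : a + b ≠ 0 := by
  rw [← CharTwo.sub_eq_add]
  exact sub_ne_zero_of_ne h

lemma eq_of_add_eq_zero {a b : F} (h : a + b = 0) : a = b := by
  by_contra hne; exact add_ne a b hne h

lemma cube_inj {x y : F} (h : x ^ 3 = y ^ 3) : x = y := by
  have h9 : x ^ 2 = y ^ 2 := by
    have h' : (x ^ 3) ^ 3 = (y ^ 3) ^ 3 := by rw [h]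
    have hx : (x ^ 3) ^ 3 = x ^ 2 := by
      rw [show (x ^ 3) ^ 3 = x ^ 8 * x by ring, pow8]; ring
    have hy : (y ^ 3) ^ 3 = y ^ 2 := by
      rw [show (y ^ 3) ^ 3 = y ^ 8 * y by ring, pow8]; ring
    rw [hx, hy] at h'; exact h'
  have hsq : (x - y) ^ 2 = 0 := by
    linear_combination h9 + (y ^ 2 - x * y) * two0
  have := pow_eq_zero_iff (two_ne_zero) |>.mp hsq
  exact sub_eq_zero.mp this

lemma pow7 {z : F} (hz : z ≠ 0) : z ^ 7 = 1 := by
  have h8 := pow8 z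
  have : z ^ 7 * z = 1 * z := by
    rw [one_mul]
    calc z ^ 7 * z = z ^ 8 := by ring
    _ = z := pow8 z
  exact mul_right_cancel₀ hz this

lemma sum_symmDiff (A B : Finset F) (g : F → F) :
    ∑ x ∈ A ∆ B, g x = ∑ x ∈ A, g x + ∑ x ∈ B, g x := by
  classical
  have hU : A ∆ B = (A \ B) ∪ (B \ A) := by rw [symmDiff_def, Finset.sup_eq_union]
  have hdisj : Disjoint (A \ B) (B \ A) := disjoint_sdiff_sdiff
  have h2a : ∑ x ∈ B ∩ A, g x + ∑ x ∈ A \ B, g x = ∑ x ∈ A, g x := by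
    rw [Finset.inter_comm]; exact Finset.sum_inter_add_sum_sdiff A B g
  have h2b : ∑ x ∈ B ∩ A, g x + ∑ x ∈ B \ A, g x = ∑ x ∈ B, g x :=
    Finset.sum_inter_add_sum_sdiff B A g
  rw [hU, Finset.sum_union hdisj, ← h2a, ← h2b]
  linear_combination (-(∑ x ∈ B ∩ A, g x)) * two0

lemma odd_cast {n : ℕ} (h : Odd n) : ((n : ℕ) : F) = 1 := by
  obtain ⟨k, hk⟩ := h
  subst hk
  push_cast
  linear_combination (k : F) * two0

lemma sum_expand (β γ : F) (X : Finset F) (hodd : Odd X.card)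
    (h0 : ∑ x ∈ X, (x + β) ^ 3 = 0) :
    ∑ x ∈ X, (x + γ) ^ 3 =
      (γ + β) * (∑ x ∈ X, x) ^ 2 + (γ + β) ^ 2 * (∑ x ∈ X, x) + (γ ^ 3 + β ^ 3) := by
  have hpt : ∀ x ∈ X, (x + γ) ^ 3 =
      (x + β) ^ 3 + ((γ + β) * x ^ 2 + ((γ + β) ^ 2 * x + (γ ^ 3 + β ^ 3))) := by
    intro x _
    linear_combination (-β^3 - 2*x*β^2 - x*γ*β + x*γ^2 - 2*x^2*β + x^2*γ) * two0
  rw [Finset.sum_congr rfl hpt, Finset.sum_add_distrib, Finset.sum_add_distrib,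
    Finset.sum_add_distrib, ← Finset.mul_sum, ← Finset.mul_sum, Finset.sum_const,
    nsmul_eq_mul, h0, odd_cast hodd, ← sum_pow_char]
  ring

lemma key (A B : F) (hAB : A ≠ B) : T ((A ^ 3 + B ^ 3) ^ 2 * (A + B)) = 1 := by
  have hwne : A + B ≠ 0 := add_ne A B hAB
  set w := A + B with hw
  set q := A / w with hq0
  have hq : q * w = A := div_mul_cancel₀ A hwne
  have hid : (A ^ 3 + B ^ 3) ^ 2 * (A + B) = w ^ 7 * (1 + q ^ 2 + q ^ 4) := by
    linear_combination
      ((-1)*w^6 + (-1)*B*w^5 + (-1)*B^2*w^4 + (-1)*B^3*w^3 + (-1)*B^4*w^2 + (-1)*B^5*w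
        + (-1)*B^6 + 5*A*w^5 + 4*A*B*w^4 + 3*A*B^2*w^3 + 2*A*B^3*w^2 + A*B^4*w
        + (-10)*A^2*w^4 + (-6)*A^2*B*w^3 + (-3)*A^2*B^2*w^2 + (-1)*A^2*B^3*w + 8*A^3*w^3
        + 2*A^3*B*w^2 + (-1)*A^3*B^2*w + (-2)*A^3*B^3 + (-1)*A^4*w^2 + A^4*B*w
        + (-1)*A^5*w + (-1)*A^6) * hw
      + (6*w^6 + (-15)*w^6*q + 18*w^6*q^2 + (-9)*w^6*q^3 + (-15)*A*w^5 + 18*A*w^5*q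
        + (-9)*A*w^5*q^2 + 18*A^2*w^4 + (-9)*A^2*w^4*q + (-9)*A^3*w^3) * hq
      + ((-3)*w^7*q + 7*w^7*q^2 + (-9)*w^7*q^3 + 4*w^7*q^4) * two0
  rw [hid, pow7 hwne, one_mul,
    show (1 + q ^ 2 + q ^ 4 : F) = 1 + (q ^ 2 + (q ^ 2) ^ 2) by ring,
    Tadd, Tzsq, Tone, add_zero]

lemma bigid (m u b E : F) (hm7 : m ^ 7 = 1) :
    (m * (u^2 + m*u + m^2 + b*m + b^2 + E^2 + m*E)) ^ 2 * m
      = 1 + (m^3*u^4 + (m^3*u^4)^4) + (m^3*b^4 + (m^3*b^4)^4) + (m^3*E^4 + (m^3*E^4)^4) := by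
  linear_combination (1 - m^5*E^16 - m^5*b^16 - m^5*u^16) * hm7
    + (-(m^5*u) - m^5*u^8) * pow8 u
    + (-(m^5*b) - m^5*b^8) * pow8 b
    + (-(m^5*E) - m^5*E^8) * pow8 E
    + (m^3*b^2*E^2 + m^3*u^2*E^2 + m^3*u^2*b^2 + m^4*E^3 + m^4*b*E^2 + m^4*b^2*E + m^4*b^3
      + m^4*u*E^2 + m^4*u*b^2 + m^4*u^2*E + m^4*u^2*b + m^4*u^3 + m^5*E^2 + m^5*b*E
      + m^5*b^2 + m^5*u*E + m^5*u*b + m^5*u^2 + m^6*E + m^6*b + m^6*u) * two0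

end Stmt9Aux

open Stmt9Aux

theorem stmt_9 (β ρ σ : GaloisField 2 3) (hρσ : ρ ≠ σ)
    (X X' : Finset (GaloisField 2 3)) (hX : X ∈ Hodd β) (hX' : X' ∈ Hodd β)
    (hd : (X ∆ X').card = 4)
    (hcomp : Relation.ReflTransGen (AdjRS (Hodd β) ρ σ) X X') :
    ¬ ∃ lam : GaloisField 2 3,
        X ∆ {ρ, σ} ∈ Hodd lam ∧ X' ∆ {ρ, σ} ∈ Hodd lam := by
  rintro ⟨lam, hm1, hm2⟩
  obtain ⟨hXodd, hX3⟩ := hX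
  obtain ⟨hX'odd, hX'3⟩ := hX'
  -- the two membership equations
  have e1 : ∑ x ∈ X ∆ ({ρ, σ} : Finset F), (x + lam) ^ 3 = 0 := hm1.2
  have e2 : ∑ x ∈ X' ∆ ({ρ, σ} : Finset F), (x + lam) ^ 3 = 0 := hm2.2
  rw [sum_symmDiff, Finset.sum_pair hρσ, sum_expand β lam X hXodd hX3] at e1
  rw [sum_symmDiff, Finset.sum_pair hρσ, sum_expand β lam X' hX'odd hX'3] at e2
  set u : F := ∑ x ∈ X, x with hu
  set u' : F := ∑ x ∈ X', x with hu'
  -- case lam = β : immediate contradiction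
  by_cases hlb : lam = β
  · subst hlb
    have hcc : (ρ + lam) ^ 3 = (σ + lam) ^ 3 := by
      linear_combination e1 + (-((σ+lam)^3) - lam*u^2 - 2*lam^2*u - lam^3) * two0
    exact hρσ (by have := cube_inj hcc; exact add_right_cancel this)
  have hμ : lam + β ≠ 0 := add_ne lam β hlb
  -- combine the two equations
  have hfac : (lam + β) * (u + u') * ((u + u') + (lam + β)) = 0 := by
    linear_combination e1 - e2 + ((lam+β)*u*u' + (lam+β)*u'^2 + (lam+β)^2*u') * two0
  -- facts about D = X ∆ X'
  have hD3 : ∑ x ∈ X ∆ X', (x + β) ^ 3 = 0 := by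
    rw [sum_symmDiff, hX3, hX'3]; ring
  have hDs : ∑ x ∈ X ∆ X', x = u + u' := sum_symmDiff X X' (fun x => x)
  rcases mul_eq_zero.mp hfac with hfac1 | hfac2
  · -- u + u' = 0 : four distinct elements with zero sum and zero cube-sum
    have huu : u + u' = 0 := by
      rcases mul_eq_zero.mp hfac1 with h | h
      · exact absurd h hμ
      · exact h
    obtain ⟨a, t, hat, hins, ht3⟩ := Finset.card_eq_succ.mp
      (show (X ∆ X').card = 3 + 1 by rw [hd])
    obtain ⟨p, q, r, hpq, hpr, hqr, ht⟩ := Finset.card_eq_three.mp ht3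
    subst ht
    have hap : a ≠ p := by intro h; exact hat (by simp [h])
    have haq : a ≠ q := by intro h; exact hat (by simp [h])
    have har : a ≠ r := by intro h; exact hat (by simp [h])
    have hsum4 : ∀ g : F → F, ∑ x ∈ X ∆ X', g x = g a + (g p + (g q + g r)) := by
      intro g
      rw [← hins, Finset.sum_insert hat, Finset.sum_insert (by simp [hpq, hpr]),
        Finset.sum_pair hqr]
    have h1e : a + (p + (q + r)) = 0 := by
      rw [← hsum4 (fun x => x), hDs]; exact huu
    have h3e : (a + β) ^ 3 + ((p + β) ^ 3 + ((q + β) ^ 3 + (r + β) ^ 3)) = 0 := by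
      rw [← hsum4 (fun x => (x + β) ^ 3)]; exact hD3
    have hzero : (a + p) * (a + q) * (p + q) = 0 := by
      linear_combination h3e
        + ((-3)*β^2 + (-3)*r*β + (-1)*r^2 + 3*q*β + q*r + (-1)*q^2 + 3*p*β + p*r
          + (-2)*p*q + (-1)*p^2 + 3*a*β + a*r + (-2)*a*q + (-2)*a*p + (-1)*a^2) * h1e
        + ((-2)*β^3 + (-3)*q^2*β + (-3)*p*q*β + 2*p*q^2 + (-3)*p^2*β + 2*p^2*q
          + (-3)*a*q*β + 2*a*q^2 + (-3)*a*p*β + 4*a*p*q + 2*a*p^2 + (-3)*a^2*β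
          + 2*a^2*q + 2*a^2*p) * two0
    exact (mul_ne_zero (mul_ne_zero (add_ne a p hap) (add_ne a q haq))
      (add_ne p q hpq)) hzero
  · -- u + u' = lam + β : use the component invariant
    have hmu_eq : u + u' = lam + β := eq_of_add_eq_zero hfac2
    -- single-step invariant
    have step : ∀ B C : Finset F, AdjRS (Hodd β) ρ σ B C →
        T (((ρ+β)^3 + (σ+β)^3)^2 * ((∑ x ∈ B, x) + (∑ x ∈ C, x))) = 0 := by
      rintro B C ⟨hB, hC, hcard4, hρm, hσm⟩
      have hD3' : ∑ x ∈ B ∆ C, (x + β) ^ 3 = 0 := by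
        rw [sum_symmDiff, hB.2, hC.2]; ring
      have hDs' : ∑ x ∈ B ∆ C, x = (∑ x ∈ B, x) + (∑ x ∈ C, x) :=
        sum_symmDiff B C (fun x => x)
      have hsub : ({ρ, σ} : Finset F) ⊆ B ∆ C := by
        intro z hz
        rcases Finset.mem_insert.mp hz with h | h
        · rwa [h]
        · rw [Finset.mem_singleton.mp h]; exact hσm
      have hE2 : ((B ∆ C) \ {ρ, σ}).card = 2 := by
        rw [Finset.card_sdiff_of_subset hsub, hcard4, Finset.card_pair hρσ]
      obtain ⟨a, b, hab, hEab⟩ := Finset.card_eq_two.mp hE2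
      have haD : a ∈ (B ∆ C) \ ({ρ, σ} : Finset F) := by rw [hEab]; simp
      have hbD : b ∈ (B ∆ C) \ ({ρ, σ} : Finset F) := by rw [hEab]; simp
      have haρσ : a ≠ ρ ∧ a ≠ σ := by
        have := (Finset.mem_sdiff.mp haD).2; simpa using this
      have hbρσ : b ≠ ρ ∧ b ≠ σ := by
        have := (Finset.mem_sdiff.mp hbD).2; simpa using this
      have hunion : B ∆ C = insert a (insert b ({ρ, σ} : Finset F)) := by
        have h := Finset.sdiff_union_of_subset hsub
        rw [hEab] at h
        rw [← h]; ext z; simp [or_assoc]; tauto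
      have hsum4 : ∀ g : F → F, ∑ x ∈ B ∆ C, g x = g a + (g b + (g ρ + g σ)) := by
        intro g
        rw [hunion, Finset.sum_insert (by simp [hab, haρσ.1, haρσ.2]),
          Finset.sum_insert (by simp [hbρσ.1, hbρσ.2]), Finset.sum_pair hρσ]
      have e3 : (a+β)^3 + ((b+β)^3 + ((ρ+β)^3 + (σ+β)^3)) = 0 := by
        rw [← hsum4 (fun x => (x + β) ^ 3)]; exact hD3'
      have es : (∑ x ∈ B, x) + (∑ x ∈ C, x) = a + (b + (ρ + σ)) := by
        rw [← hDs', hsum4 (fun x => x)]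
      have hcab : (a+β)^3 + (b+β)^3 = (ρ+β)^3 + (σ+β)^3 := by
        linear_combination e3 - ((ρ+β)^3 + (σ+β)^3) * two0
      have k1 : T (((ρ+β)^3 + (σ+β)^3)^2 * ((ρ+β) + (σ+β))) = 1 :=
        key _ _ (fun h => hρσ (add_right_cancel h))
      have k2 : T (((ρ+β)^3 + (σ+β)^3)^2 * ((a+β) + (b+β))) = 1 := by
        have := key (a+β) (b+β) (fun h => hab (add_right_cancel h))
        rwa [hcab] at this
      have hsplit : ((ρ+β)^3 + (σ+β)^3)^2 * ((∑ x ∈ B, x) + (∑ x ∈ C, x))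
          = ((ρ+β)^3 + (σ+β)^3)^2 * ((a+β) + (b+β))
            + ((ρ+β)^3 + (σ+β)^3)^2 * ((ρ+β) + (σ+β)) := by
        linear_combination (((ρ+β)^3 + (σ+β)^3)^2) * es
          - 2*(((ρ+β)^3 + (σ+β)^3)^2)*β * two0
      rw [hsplit, Tadd, k1, k2]
      linear_combination two0
    -- propagate along the chain
    have hchain : ∀ Y : Finset F, Relation.ReflTransGen (AdjRS (Hodd β) ρ σ) X Y →
        T (((ρ+β)^3 + (σ+β)^3)^2 * (u + ∑ x ∈ Y, x)) = 0 := by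
      intro Y h
      induction h with
      | refl =>
          rw [show ((ρ+β)^3 + (σ+β)^3)^2 * (u + u) = (0 : F) by
            linear_combination (((ρ+β)^3 + (σ+β)^3)^2 * u) * two0, Tzero]
      | @tail B C hR hadj ih =>
          have hstep := step B C hadj
          have hsplit2 : ((ρ+β)^3 + (σ+β)^3)^2 * (u + ∑ x ∈ C, x)
              = ((ρ+β)^3 + (σ+β)^3)^2 * (u + ∑ x ∈ B, x)
                + ((ρ+β)^3 + (σ+β)^3)^2 * ((∑ x ∈ B, x) + (∑ x ∈ C, x)) := by
            linear_combination (-(((ρ+β)^3 + (σ+β)^3)^2 * ∑ x ∈ B, x)) * two0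
          rw [hsplit2, Tadd, ih, hstep, add_zero]
    have hinv : T (((ρ+β)^3 + (σ+β)^3)^2 * (u + u')) = 0 := hchain X' hcomp
    -- final: the λ-equation forces trace 1
    have hc : (ρ+β)^3 + (σ+β)^3
        = (lam+β) * (u^2 + (lam+β)*u + (lam+β)^2 + β*(lam+β) + β^2 + (ρ+σ)^2
            + (lam+β)*(ρ+σ)) := by
      linear_combination e1
        + (β*σ^2 - β*ρ*σ + β*ρ^2 - β*u^2 + β^2*σ + β^2*ρ - β^2*u - β^3 - 2*lam*σ^2
          - lam*ρ*σ - 2*lam*ρ^2 - lam*u^2 - lam*β*σ - lam*β*ρ - 2*lam*β*u - 3*lam*β^2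
          - 2*lam^2*σ - 2*lam^2*ρ - lam^2*u - 2*lam^2*β - 2*lam^3) * two0
    have hbig := bigid (lam+β) u β (ρ+σ) (pow7 hμ)
    have hTfin : T (((ρ+β)^3 + (σ+β)^3)^2 * (lam+β)) = 1 := by
      rw [hc, hbig, Tadd, Tadd, Tadd, Tone, Tzz4, Tzz4, Tzz4]
      norm_num
    rw [← hmu_eq] at hTfin
    rw [hinv] at hTfin
    exact zero_ne_one hTfin
end

section
/- Let C ⊆ F_2^8 be an extended perfect binary code of length 8 (so |C| = 16), and let i ≠ j be two coordinates. Then every ij-component of C has cardinality 8; i.e., C splits into exactly two ij-components, each of maximal cardinality |C|/2. -/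
/-- `ij`-adjacency in a code `C` of length 8: both codewords in `C`, at Hamming
distance 4, differing in both coordinates `i` and `j`. -/
def adjC (C : Set (Fin 8 → ZMod 2)) (i j : Fin 8) (a b : Fin 8 → ZMod 2) : Prop :=
  a ∈ C ∧ b ∈ C ∧ hammingDist a b = 4 ∧ a i ≠ b i ∧ a j ≠ b j

open Finset

/-!
By the Plotkin bound, for any two coordinates `p ≠ q` each of the four classes
`{v ∈ C | v p = a ∧ v q = b}` has at most, hence exactly, 4 codewords. Two codewords at distance 6
agree only at two coordinates `p, q`, and a third codeword of their class there would be at total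
distance 6 from the pair; so distinct codewords are at distance 4 or 8, i.e. `ij`-adjacent as soon as
they differ at `i` and `j` and are not complementary. Adjacency preserves `v i + v j`, and the 8
codewords with a given value of `v i + v j` are connected: two codewords agreeing at `i` and `j` have
a common neighbour among the 4 codewords of the opposite class, of which at most two are complements.
-/

lemma ZMod.eq_add_one_of_ne {a b : ZMod 2} (h : a ≠ b) : b = a + 1 := by
  revert a b; decide

section BinaryWords

variable {ι : Type*} [Fintype ι]

lemma hammingDist_eq_sum_ite (x y : ι → ZMod 2) :
    hammingDist x y = ∑ k, if x k ≠ y k then 1 else 0 :=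
  card_filter _ _

lemma hammingDist_add_hammingDist (x y z : ι → ZMod 2) :
    hammingDist z x + hammingDist z y = hammingDist x y + 2 * #{k | x k = y k ∧ z k ≠ x k} := by
  simp only [hammingDist_eq_sum_ite, card_filter, mul_sum, ← sum_add_distrib]
  refine sum_congr rfl fun k _ => ?_
  generalize x k = a, y k = b, z k = c
  revert a b c
  decide

lemma eq_add_one_of_hammingDist_eq_card {x y : ι → ZMod 2}
    (h : hammingDist x y = Fintype.card ι) : y = x + 1 := by
  have hall : ∀ k, x k ≠ y k := by
    simpa [filter_eq_self] using (card_eq_iff_eq_univ _).mp h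
  exact funext fun k => ZMod.eq_add_one_of_ne (hall k)

lemma two_mul_sum_card_filter_ne_le {α : Type*} (K : Finset α) (f : α → ZMod 2) :
    2 * ∑ x ∈ K, #{y ∈ K | f x ≠ f y} ≤ #K ^ 2 := by
  set a := #{y ∈ K | f y = 0}
  set b := #{y ∈ K | ¬f y = 0}
  have hab : #K = a + b := (card_filter_add_card_filter_not _).symm
  have hfiber : ∀ x ∈ K, #{y ∈ K | f x ≠ f y} = if f x = 0 then b else a := by
    intro x _
    split_ifs with hx
    · simp only [hx, ne_comm, b]
    · refine congrArg card (filter_congr fun y _ => ?_)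
      generalize f x = u, f y = v at hx ⊢
      revert u v; decide
  have hsum : ∑ x ∈ K, #{y ∈ K | f x ≠ f y} = 2 * a * b := by
    rw [sum_congr rfl hfiber, sum_ite, sum_const, sum_const, smul_eq_mul, smul_eq_mul]
    ring
  rw [hsum, hab]
  nlinarith [sq_nonneg ((a : ℤ) - b)]

theorem plotkin_bound (K : Finset (ι → ZMod 2)) (S : Finset ι) {d : ℕ}
    (hS : ∀ x ∈ K, ∀ y ∈ K, ∀ k ∉ S, x k = y k)
    (hd : ∀ x ∈ K, ∀ y ∈ K, x ≠ y → d ≤ hammingDist x y) :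
    2 * d * (#K * (#K - 1)) ≤ #S * #K ^ 2 := by
  have hlow : ∀ x ∈ K, (#K - 1) * d ≤ ∑ y ∈ K, hammingDist x y := by
    intro x hx
    calc (#K - 1) * d = #(K.erase x) • d := by rw [card_erase_of_mem hx, smul_eq_mul]
      _ ≤ ∑ y ∈ K.erase x, hammingDist x y :=
        card_nsmul_le_sum _ _ _ fun y hy => hd x hx y (mem_of_mem_erase hy) (ne_of_mem_erase hy).symm
      _ ≤ ∑ y ∈ K, hammingDist x y := sum_le_sum_of_subset (erase_subset x K)
  have hdist : ∀ x ∈ K, ∀ y ∈ K, hammingDist x y = ∑ k ∈ S, if x k ≠ y k then 1 else 0 := by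
    intro x hx y hy
    rw [hammingDist_eq_sum_ite]
    exact (sum_subset (subset_univ S) fun k _ hk => by simp [hS x hx y hy k hk]).symm
  have htotal : ∑ x ∈ K, ∑ y ∈ K, hammingDist x y = ∑ k ∈ S, ∑ x ∈ K, #{y ∈ K | x k ≠ y k} := by
    calc ∑ x ∈ K, ∑ y ∈ K, hammingDist x y
        = ∑ x ∈ K, ∑ y ∈ K, ∑ k ∈ S, if x k ≠ y k then 1 else 0 :=
          sum_congr rfl fun x hx => sum_congr rfl fun y hy => hdist x hx y hy
      _ = ∑ x ∈ K, ∑ k ∈ S, ∑ y ∈ K, if x k ≠ y k then 1 else 0 :=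
          sum_congr rfl fun x _ => sum_comm
      _ = ∑ k ∈ S, ∑ x ∈ K, #{y ∈ K | x k ≠ y k} := by
          rw [sum_comm]; simp only [card_filter]
  calc 2 * d * (#K * (#K - 1)) = 2 * ∑ _x ∈ K, (#K - 1) * d := by
        rw [sum_const, smul_eq_mul]; ring
    _ ≤ 2 * ∑ x ∈ K, ∑ y ∈ K, hammingDist x y := by gcongr with x hx; exact hlow x hx
    _ = ∑ k ∈ S, 2 * ∑ x ∈ K, #{y ∈ K | x k ≠ y k} := by rw [htotal, mul_sum]
    _ ≤ ∑ _k ∈ S, #K ^ 2 := sum_le_sum fun k _ => two_mul_sum_card_filter_ne_le K (· k)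
    _ = #S * #K ^ 2 := by rw [sum_const, smul_eq_mul]

end BinaryWords

open Relation

section Adjacency

variable {C : Set (Fin 8 → ZMod 2)} {i j : Fin 8} {x y : Fin 8 → ZMod 2}

lemma adjC_symm (h : adjC C i j x y) : adjC C i j y x :=
  ⟨h.2.1, h.1, hammingDist_comm x y ▸ h.2.2.1, h.2.2.2.1.symm, h.2.2.2.2.symm⟩

lemma add_eq_of_reflTransGen_adjC (h : ReflTransGen (adjC C i j) x y) :
    x i + x j = y i + y j := by
  induction h with
  | refl => rfl
  | tail _ hstep ih =>
    rw [ih, ZMod.eq_add_one_of_ne hstep.2.2.2.1, ZMod.eq_add_one_of_ne hstep.2.2.2.2]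
    grind

end Adjacency

section ExtendedPerfectCode

variable {C : Finset (Fin 8 → ZMod 2)} {p q : Fin 8}

lemma card_filter_apply_le_four (hdist : ∀ c ∈ C, ∀ c' ∈ C, c ≠ c' → 4 ≤ hammingDist c c')
    (hpq : p ≠ q) (a b : ZMod 2) : #{v ∈ C | v p = a ∧ v q = b} ≤ 4 := by
  set K := {v ∈ C | v p = a ∧ v q = b}
  have hagree : ∀ x ∈ K, ∀ y ∈ K, ∀ k ∉ ({p, q}ᶜ : Finset (Fin 8)), x k = y k := by
    intro x hx y hy k hk
    simp only [K, mem_filter] at hx hy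
    obtain rfl | rfl : k = p ∨ k = q := by simpa [or_iff_not_imp_left] using hk
    exacts [hx.2.1.trans hy.2.1.symm, hx.2.2.trans hy.2.2.symm]
  have hplotkin := plotkin_bound K {p, q}ᶜ hagree
    fun x hx y hy => hdist x (mem_filter.1 hx).1 y (mem_filter.1 hy).1
  rw [card_compl, card_pair hpq, Fintype.card_fin] at hplotkin
  by_contra! hK
  obtain ⟨n, hn⟩ : ∃ n, #K = n + 5 := ⟨#K - 5, by omega⟩
  rw [hn, show n + 5 - 1 = n + 4 by omega] at hplotkin
  nlinarith

lemma card_filter_apply_eq_four (hcard : #C = 16)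
    (hdist : ∀ c ∈ C, ∀ c' ∈ C, c ≠ c' → 4 ≤ hammingDist c c')
    (hpq : p ≠ q) (a b : ZMod 2) : #{v ∈ C | v p = a ∧ v q = b} = 4 := by
  have hle : ∀ t : ZMod 2 × ZMod 2, #{v ∈ C | (v p, v q) = t} ≤ 4 := fun t => by
    simpa only [Prod.ext_iff] using card_filter_apply_le_four hdist hpq t.1 t.2
  have hfibers : #C = ∑ t : ZMod 2 × ZMod 2, #{v ∈ C | (v p, v q) = t} :=
    card_eq_sum_card_fiberwise fun _ _ => mem_coe.2 (mem_univ _)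
  by_contra hne
  have hlt : ∑ t : ZMod 2 × ZMod 2, #{v ∈ C | (v p, v q) = t} < ∑ _t : ZMod 2 × ZMod 2, 4 :=
    sum_lt_sum (fun t _ => hle t)
      ⟨(a, b), mem_univ _, lt_of_le_of_ne (hle _) (by simpa only [Prod.ext_iff] using hne)⟩
  simp only [sum_const, card_univ, Fintype.card_prod, ZMod.card, smul_eq_mul] at hlt
  omega

lemma exists_mem_apply_eq_ne_ne (hcard : #C = 16)
    (hdist : ∀ c ∈ C, ∀ c' ∈ C, c ≠ c' → 4 ≤ hammingDist c c')
    (hpq : p ≠ q) (a b : ZMod 2) (x y : Fin 8 → ZMod 2) :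
    ∃ z ∈ C, z p = a ∧ z q = b ∧ z ≠ x ∧ z ≠ y := by
  by_contra! h
  have hsub : {v ∈ C | v p = a ∧ v q = b} ⊆ {x, y} := fun z hz => by
    obtain ⟨hzC, hzp, hzq⟩ := mem_filter.1 hz
    by_cases hzx : z = x
    · simp [hzx]
    · simp [h z hzC hzp hzq hzx]
  have := (card_le_card hsub).trans card_le_two
  rw [card_filter_apply_eq_four hcard hdist hpq] at this
  omega

lemma hammingDist_ne_six (hcard : #C = 16)
    (hdist : ∀ c ∈ C, ∀ c' ∈ C, c ≠ c' → 4 ≤ hammingDist c c')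
    {x y : Fin 8 → ZMod 2} (hx : x ∈ C) (hy : y ∈ C) : hammingDist x y ≠ 6 := by
  intro h6
  have hagree : #{k | x k = y k} = 2 := by
    have := card_filter_add_card_filter_not (s := univ) fun k => x k = y k
    rw [card_univ, Fintype.card_fin] at this
    change _ + hammingDist x y = 8 at this
    omega
  obtain ⟨p, q, hpq, hpq_eq⟩ := card_eq_two.1 hagree
  have hagree_iff : ∀ k, x k = y k ↔ k = p ∨ k = q := fun k => by
    simpa using congrArg (k ∈ ·) hpq_eq
  obtain ⟨z, hz, hzp, hzq, hzx, hzy⟩ := exists_mem_apply_eq_ne_ne hcard hdist hpq (x p) (x q) x y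
  have hzero : #{k | x k = y k ∧ z k ≠ x k} = 0 := by
    refine card_eq_zero.2 (filter_eq_empty_iff.2 fun k _ ⟨hk, hzk⟩ => hzk ?_)
    obtain rfl | rfl := (hagree_iff k).1 hk
    exacts [hzp, hzq]
  have := hammingDist_add_hammingDist x y z
  have := hdist z hz x hx hzx
  have := hdist z hz y hy hzy
  omega

lemma hammingDist_eq_four_or_eq_eight (hcard : #C = 16)
    (hpar : ∀ c ∈ C, ∀ c' ∈ C, hammingNorm c % 2 = hammingNorm c' % 2)
    (hdist : ∀ c ∈ C, ∀ c' ∈ C, c ≠ c' → 4 ≤ hammingDist c c')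
    {x y : Fin 8 → ZMod 2} (hx : x ∈ C) (hy : y ∈ C) (hne : x ≠ y) :
    hammingDist x y = 4 ∨ hammingDist x y = 8 := by
  have hsum := hammingDist_add_hammingDist x y 0
  simp only [hammingDist_zero_left] at hsum
  have := hpar x hx y hy
  have := hdist x hx y hy hne
  have := hammingDist_ne_six hcard hdist hx hy
  have : hammingDist x y ≤ 8 := hammingDist_le_card_fintype
  omega

lemma adjC_of_ne_add_one (hcard : #C = 16)
    (hpar : ∀ c ∈ C, ∀ c' ∈ C, hammingNorm c % 2 = hammingNorm c' % 2)
    (hdist : ∀ c ∈ C, ∀ c' ∈ C, c ≠ c' → 4 ≤ hammingDist c c')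
    {i j : Fin 8} {x y : Fin 8 → ZMod 2} (hx : x ∈ C) (hy : y ∈ C)
    (hi : x i ≠ y i) (hj : x j ≠ y j) (hy1 : y ≠ x + 1) : adjC C i j x y := by
  refine ⟨hx, hy, ?_, hi, hj⟩
  refine (hammingDist_eq_four_or_eq_eight hcard hpar hdist hx hy ?_).resolve_right fun h8 => ?_
  · rintro rfl; exact hi rfl
  · exact hy1 (eq_add_one_of_hammingDist_eq_card h8)

lemma exists_adjC_adjC (hcard : #C = 16)
    (hpar : ∀ c ∈ C, ∀ c' ∈ C, hammingNorm c % 2 = hammingNorm c' % 2)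
    (hdist : ∀ c ∈ C, ∀ c' ∈ C, c ≠ c' → 4 ≤ hammingDist c c')
    {i j : Fin 8} (hij : i ≠ j) {x x' : Fin 8 → ZMod 2} (hx : x ∈ C) (hx' : x' ∈ C)
    (hi : x i = x' i) (hj : x j = x' j) : ∃ y, adjC C i j x y ∧ adjC C i j x' y := by
  obtain ⟨y, hy, hyi, hyj, hyx, hyx'⟩ :=
    exists_mem_apply_eq_ne_ne hcard hdist hij (x i + 1) (x j + 1) (x + 1) (x' + 1)
  refine ⟨y, adjC_of_ne_add_one hcard hpar hdist hx hy ?_ ?_ hyx,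
    adjC_of_ne_add_one hcard hpar hdist hx' hy ?_ ?_ hyx'⟩
  all_goals simp only [hyi, hyj, ← hi, ← hj]; exact (succ_ne_self _).symm

lemma reflTransGen_adjC_of_eq_of_eq (hcard : #C = 16)
    (hpar : ∀ c ∈ C, ∀ c' ∈ C, hammingNorm c % 2 = hammingNorm c' % 2)
    (hdist : ∀ c ∈ C, ∀ c' ∈ C, c ≠ c' → 4 ≤ hammingDist c c')
    {i j : Fin 8} (hij : i ≠ j) {x x' : Fin 8 → ZMod 2} (hx : x ∈ C) (hx' : x' ∈ C)
    (hi : x i = x' i) (hj : x j = x' j) : ReflTransGen (adjC C i j) x x' :=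
  let ⟨_, hxy, hx'y⟩ := exists_adjC_adjC hcard hpar hdist hij hx hx' hi hj
  (ReflTransGen.single hxy).tail (adjC_symm hx'y)

lemma reflTransGen_adjC_of_add_eq (hcard : #C = 16)
    (hpar : ∀ c ∈ C, ∀ c' ∈ C, hammingNorm c % 2 = hammingNorm c' % 2)
    (hdist : ∀ c ∈ C, ∀ c' ∈ C, c ≠ c' → 4 ≤ hammingDist c c')
    {i j : Fin 8} (hij : i ≠ j) {x y : Fin 8 → ZMod 2} (hx : x ∈ C) (hy : y ∈ C)
    (h : x i + x j = y i + y j) : ReflTransGen (adjC C i j) x y := by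
  by_cases hi : x i = y i
  · exact reflTransGen_adjC_of_eq_of_eq hcard hpar hdist hij hx hy hi
      (add_left_cancel (hi ▸ h))
  · obtain ⟨w, hxw, -⟩ := exists_adjC_adjC hcard hpar hdist hij hx hx rfl rfl
    have hj : x j ≠ y j := by grind
    have hwi : w i = y i := by
      rw [ZMod.eq_add_one_of_ne hxw.2.2.2.1, ZMod.eq_add_one_of_ne hi]
    have hwj : w j = y j := by
      rw [ZMod.eq_add_one_of_ne hxw.2.2.2.2, ZMod.eq_add_one_of_ne hj]
    exact .head hxw (reflTransGen_adjC_of_eq_of_eq hcard hpar hdist hij hxw.2.1 hy hwi hwj)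

lemma card_filter_add_apply_eq_eight (hcard : #C = 16)
    (hdist : ∀ c ∈ C, ∀ c' ∈ C, c ≠ c' → 4 ≤ hammingDist c c')
    {i j : Fin 8} (hij : i ≠ j) (s : ZMod 2) : #{v ∈ C | v i + v j = s} = 8 := by
  rw [card_eq_sum_card_fiberwise (f := fun v => v i) (t := univ) fun _ _ => mem_coe.2 (mem_univ _)]
  have hfiber : ∀ a : ZMod 2, #{v ∈ {v ∈ C | v i + v j = s} | v i = a} = 4 := fun a => by
    rw [filter_filter, ← card_filter_apply_eq_four hcard hdist hij a (s - a)]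
    exact congrArg card (filter_congr fun v _ => by grind)
  simp [hfiber]

end ExtendedPerfectCode

theorem stmt_11 (C : Set (Fin 8 → ZMod 2))
    (hcard : C.ncard = 16)
    (hpar : ∀ c ∈ C, ∀ c' ∈ C, hammingNorm c % 2 = hammingNorm c' % 2)
    (hdist : ∀ c ∈ C, ∀ c' ∈ C, c ≠ c' → 4 ≤ hammingDist c c')
    (i j : Fin 8) (hij : i ≠ j) :
    ∀ c ∈ C, {c' ∈ C | Relation.ReflTransGen (adjC C i j) c c'}.ncard = 8 := by
  intro c hc
  obtain ⟨C, rfl⟩ := C.toFinite.exists_finset_coe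
  rw [Set.ncard_coe_finset] at hcard
  have hcomponent : {c' ∈ (C : Set _) | ReflTransGen (adjC C i j) c c'} =
      ({v ∈ C | v i + v j = c i + c j} : Finset _) := by
    ext v
    simp only [Set.mem_ofPred_eq, coe_filter, mem_coe]
    exact and_congr_right fun hv => ⟨fun h => (add_eq_of_reflTransGen_adjC h).symm,
      fun h => reflTransGen_adjC_of_add_eq hcard hpar hdist hij hc hv h.symm⟩
  rw [hcomponent, Set.ncard_coe_finset, card_filter_add_apply_eq_eight hcard hdist hij]
end

section
/- Let n = 2^r − 1 with r ≥ 3, let C ⊆ F_2^n be a perfect binary single-error-correcting code, let i be a coordinate, and let I and I' be the sets of i-even and i-odd codewords of C, respectively. Then the covering radius of I and the covering radius of I' both equal 3, and the set of vectors of F_2^n at Hamming distance exactly 3 from I is precisely I' ∪ (I' + e_i). -/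
/-- `C` is a perfect binary single-error-correcting code: every vector is at
Hamming distance at most 1 from exactly one codeword. -/
def IsPerfectCode (n : ℕ) (C : Set (Fin n → ZMod 2)) : Prop :=
  ∀ v : Fin n → ZMod 2, ∃! c, c ∈ C ∧ hammingDist v c ≤ 1

/-- `x` is `i`-even: either `wt x` is odd and `x i = 1`, or `wt x` is even and
`x i = 0`. -/
def IEven (n : ℕ) (i : Fin n) (x : Fin n → ZMod 2) : Prop :=
  (Odd (hammingNorm x) ∧ x i = 1) ∨ (Even (hammingNorm x) ∧ x i = 0)

/-! Let `iParity i x = ∑ⱼ xⱼ + xᵢ`: it is additive, vanishes exactly on the `i`-even vectors,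
and flips under `x ↦ x + e_j` exactly when `j ≠ i`. In a perfect code the codewords at
distance 3 from a codeword `c` are `c + e_j + e_k + e_l`, one for each pair `{j, k}`; a pigeonhole
argument on these triples (`n ≥ 4`) gives codewords of the other parity within distance 3 of
`c` and of `c + e_i`, and within distance 2 of `c + e_j` for `j ≠ i`. As every vector is within
distance 1 of a codeword, each parity class has covering radius at most 3, and the vectors
at distance 3 from it are among the codewords `c` of the other class and the `c + e_i`.
Conversely those are at distance at least 3 from the class: `c` by minimum distance, and
`c + e_i` because the distance between codewords of different parity and different `i`-th
coordinate is even. -/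
open Finset

theorem hammingDist_update_add {ι : Type*} [Fintype ι] [DecidableEq ι] {β : ι → Type*}
    [∀ k, DecidableEq (β k)] (x y : ∀ k, β k) (j : ι) (a : β j) :
    hammingDist (Function.update x j a) y + (if x j ≠ y j then 1 else 0) =
      hammingDist x y + (if a ≠ y j then 1 else 0) := by
  simp only [hammingDist, card_filter, ← add_sum_erase _ _ (mem_univ j), Function.update_self]
  rw [sum_congr rfl fun k hk => by rw [Function.update_of_ne (ne_of_mem_erase hk)]]
  omega

theorem ZMod.add_one_eq_of_ne {a b : ZMod 2} (h : a ≠ b) : a + 1 = b := by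
  revert a b; decide

variable {n : ℕ}

theorem Fin.exists_notMem_of_card_lt {s : Finset (Fin n)} (h : #s < n) : ∃ k, k ∉ s := by
  obtain ⟨k, -, hk⟩ := exists_mem_notMem_of_card_lt_card (s := s) (t := univ)
    (by rwa [card_univ, Fintype.card_fin])
  exact ⟨k, hk⟩

theorem unitVec_apply_of_ne {j k : Fin n} (h : k ≠ j) : unitVec n j k = 0 :=
  Pi.single_eq_of_ne h 1

theorem unitVec_injective : Function.Injective (unitVec n) := fun a b h => by
  by_contra hab
  simpa [unitVec, Pi.single_apply, hab] using congrFun h a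

theorem add_unitVec_eq_update (x : Fin n → ZMod 2) (j : Fin n) :
    x + unitVec n j = Function.update x j (x j + 1) := by
  ext k
  rcases eq_or_ne k j with rfl | h
  · simp [unitVec]
  · simp [unitVec_apply_of_ne h, h]

theorem add_unitVec_add_unitVec_self (x : Fin n → ZMod 2) (j : Fin n) :
    x + unitVec n j + unitVec n j = x :=
  funext fun k => CharTwo.add_cancel_right (x k) (unitVec n j k)

variable {x y : Fin n → ZMod 2} {i j k m : Fin n}

theorem hammingDist_add_unitVec_of_eq (h : x j = y j) :
    hammingDist (x + unitVec n j) y = hammingDist x y + 1 := by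
  have := hammingDist_update_add x y j (x j + 1)
  rwa [if_neg (not_not.mpr h), if_pos (by simp [h]), add_zero, ← add_unitVec_eq_update] at this

theorem hammingDist_add_unitVec_of_ne (h : x j ≠ y j) :
    hammingDist (x + unitVec n j) y + 1 = hammingDist x y := by
  have := hammingDist_update_add x y j (x j + 1)
  rwa [ZMod.add_one_eq_of_ne h, if_pos h, if_neg (not_not.mpr rfl), add_zero,
    ← ZMod.add_one_eq_of_ne h, ← add_unitVec_eq_update] at this

theorem hammingDist_add_unitVec_self (x : Fin n → ZMod 2) (j : Fin n) :
    hammingDist (x + unitVec n j) x = 1 := by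
  rw [hammingDist_add_unitVec_of_eq rfl, hammingDist_self]

theorem hammingDist_add_unitVec_le (x y : Fin n → ZMod 2) (j : Fin n) :
    hammingDist x (y + unitVec n j) ≤ hammingDist x y + 1 :=
  calc _ ≤ hammingDist x y + hammingDist y (y + unitVec n j) := hammingDist_triangle _ _ _
    _ = _ := by rw [hammingDist_comm y, hammingDist_add_unitVec_self]

theorem hammingDist_add_unitVec_add_unitVec (x : Fin n → ZMod 2) (h : j ≠ k) :
    hammingDist (x + unitVec n j + unitVec n k) x = 2 := by
  rw [hammingDist_add_unitVec_of_eq (by simp [unitVec_apply_of_ne h.symm]),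
    hammingDist_add_unitVec_self]

theorem eq_or_eq_add_unitVec_of_hammingDist_le_one (h : hammingDist x y ≤ 1) :
    y = x ∨ ∃ m, y = x + unitVec n m := by
  refine or_iff_not_imp_left.mpr fun hxy => ?_
  obtain ⟨m, hm⟩ := Function.ne_iff.mp (Ne.symm hxy)
  have := hammingDist_add_unitVec_of_ne hm
  exact ⟨m, (eq_of_hammingDist_eq_zero (by omega)).symm⟩

/-- Additive substitute for `IEven`: `x` is `i`-even iff `iParity i x = 0`, since
`wt x ≡ ∑ j, x j (mod 2)`. -/
def iParity (i : Fin n) (x : Fin n → ZMod 2) : ZMod 2 := ∑ j, x j + x i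

theorem natCast_hammingNorm (x : Fin n → ZMod 2) : (hammingNorm x : ZMod 2) = ∑ j, x j := by
  rw [hammingNorm, card_filter, Nat.cast_sum]
  refine sum_congr rfl fun j _ => ?_
  generalize x j = a
  revert a; decide

theorem iEven_iff_iParity_eq_zero : IEven n i x ↔ iParity i x = 0 := by
  rw [IEven, iParity, ← natCast_hammingNorm]
  rcases Nat.even_or_odd (hammingNorm x) with h | h
  · simp [h, ZMod.natCast_eq_zero_iff_even.mpr h, Nat.not_odd_iff_even.mpr h]
  · simp only [h, ZMod.natCast_eq_one_iff_odd.mpr h, Nat.not_even_iff_odd.mpr h]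
    generalize x i = a
    revert a; decide

theorem iParity_add (x y : Fin n → ZMod 2) :
    iParity i (x + y) = iParity i x + iParity i y := by
  simp only [iParity, Pi.add_apply, sum_add_distrib]
  ring

theorem iParity_unitVec (i j : Fin n) : iParity i (unitVec n j) = if j = i then 0 else 1 := by
  have h2 : (1 + 1 : ZMod 2) = 0 := rfl
  rcases eq_or_ne j i with rfl | h
  · simp [iParity, unitVec, h2]
  · simp [iParity, unitVec, h]

theorem iParity_add_unitVec_self (x : Fin n → ZMod 2) (i : Fin n) :
    iParity i (x + unitVec n i) = iParity i x := by
  rw [iParity_add, iParity_unitVec, if_pos rfl, add_zero]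

theorem iParity_add_unitVec_of_ne (x : Fin n → ZMod 2) (h : j ≠ i) :
    iParity i (x + unitVec n j) = iParity i x + 1 := by
  rw [iParity_add, iParity_unitVec, if_neg h]

theorem natCast_hammingDist (i : Fin n) (x y : Fin n → ZMod 2) :
    (hammingDist x y : ZMod 2) = iParity i x + iParity i y + x i + y i := by
  rw [hammingDist_eq_hammingNorm, natCast_hammingNorm]
  simp only [iParity, Pi.add_apply, Pi.neg_apply, CharTwo.neg_eq, sum_add_distrib]
  linear_combination -(x i + y i) * CharTwo.two_eq_zero (R := ZMod 2)

namespace IsPerfectCode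

variable {C : Set (Fin n → ZMod 2)} (hC : IsPerfectCode n C) {c c' : Fin n → ZMod 2}
include hC

theorem eq_of_hammingDist_le_one (hc : c ∈ C) (hc' : c' ∈ C) (h : hammingDist x c ≤ 1)
    (h' : hammingDist x c' ≤ 1) : c = c' :=
  (hC x).unique ⟨hc, h⟩ ⟨hc', h'⟩

theorem eq_of_hammingDist_le_two (hc : c ∈ C) (hc' : c' ∈ C) (h : hammingDist c c' ≤ 2) :
    c = c' := by
  by_contra hne
  obtain ⟨j, hj⟩ := Function.ne_iff.mp hne
  have := hammingDist_add_unitVec_of_ne hj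
  exact hne (hC.eq_of_hammingDist_le_one hc hc'
    (x := c + unitVec n j) (hammingDist_add_unitVec_self c j).le (by omega))

theorem eq_of_add_unitVec_mem (h : x + unitVec n j ∈ C) (h' : x + unitVec n k ∈ C) : j = k :=
  unitVec_injective <| add_left_cancel <| hC.eq_of_hammingDist_le_one h h'
    (by rw [hammingDist_comm, hammingDist_add_unitVec_self])
    (by rw [hammingDist_comm, hammingDist_add_unitVec_self])

theorem add_unitVec_add_unitVec_notMem (hc : c ∈ C) (hjk : j ≠ k) :
    c + unitVec n j + unitVec n k ∉ C := fun h => by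
  have hd := hammingDist_add_unitVec_add_unitVec c hjk
  rw [hC.eq_of_hammingDist_le_two h hc hd.le, hammingDist_self] at hd
  omega

theorem exists_add_three_unitVec_mem (hc : c ∈ C) (hjk : j ≠ k) :
    ∃ m, c + unitVec n j + unitVec n k + unitVec n m ∈ C := by
  obtain ⟨c', ⟨hc', hd⟩, -⟩ := hC (c + unitVec n j + unitVec n k)
  rcases eq_or_eq_add_unitVec_of_hammingDist_le_one hd with rfl | ⟨m, rfl⟩
  · exact absurd hc' (hC.add_unitVec_add_unitVec_notMem hc hjk)
  · exact ⟨m, hc'⟩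

theorem exists_add_three_unitVec_mem_of_ne (hn : 4 ≤ n) (hc : c ∈ C) (hm : m ≠ i) :
    ∃ k l, k ≠ i ∧ l ≠ i ∧ c + unitVec n m + unitVec n k + unitVec n l ∈ C := by
  obtain ⟨k₁, hk₁⟩ := Fin.exists_notMem_of_card_lt (s := {i, m}) (card_le_two.trans_lt (by omega))
  obtain ⟨k₂, hk₂⟩ := Fin.exists_notMem_of_card_lt (s := {i, m, k₁})
    (card_le_three.trans_lt (by omega))
  simp only [mem_insert, mem_singleton, not_or] at hk₁ hk₂
  obtain ⟨l₁, hl₁⟩ := hC.exists_add_three_unitVec_mem hc (Ne.symm hk₁.2)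
  obtain ⟨l₂, hl₂⟩ := hC.exists_add_three_unitVec_mem hc (Ne.symm hk₂.2.1)
  by_cases h₁ : l₁ = i
  · by_cases h₂ : l₂ = i
    · subst h₁ h₂
      rw [add_right_comm _ (unitVec n k₁)] at hl₁
      rw [add_right_comm _ (unitVec n k₂)] at hl₂
      exact absurd (hC.eq_of_add_unitVec_mem hl₂ hl₁) hk₂.2.2
    · exact ⟨k₂, l₂, hk₂.1, h₂, hl₂⟩
  · exact ⟨k₁, l₁, hk₁.1, h₁, hl₁⟩

theorem exists_add_four_unitVec_mem (hn : 4 ≤ n) (hc : c ∈ C) (i : Fin n) :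
    ∃ j k l, j ≠ i ∧ k ≠ i ∧ l ≠ i ∧
      c + unitVec n i + unitVec n j + unitVec n k + unitVec n l ∈ C := by
  obtain ⟨j, hj⟩ := Fin.exists_notMem_of_card_lt (s := {i}) (by simp; omega)
  rw [mem_singleton] at hj
  obtain ⟨m, hm⟩ := hC.exists_add_three_unitVec_mem hc (Ne.symm hj)
  obtain ⟨k, hk⟩ := Fin.exists_notMem_of_card_lt (s := {i, j, m})
    (card_le_three.trans_lt (by omega))
  simp only [mem_insert, mem_singleton, not_or] at hk
  obtain ⟨c', ⟨hc', hd⟩, -⟩ := hC (c + unitVec n i + unitVec n j + unitVec n k)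
  rcases eq_or_eq_add_unitVec_of_hammingDist_le_one hd with rfl | ⟨l, rfl⟩
  · exact absurd (hC.eq_of_add_unitVec_mem hc' hm) hk.2.2
  · refine ⟨j, k, l, hj, hk.1, ?_, hc'⟩
    rintro rfl
    rw [add_right_comm c, add_right_comm (c + unitVec n j), add_unitVec_add_unitVec_self] at hc'
    exact hC.add_unitVec_add_unitVec_notMem hc (Ne.symm hk.2.1) hc'

theorem three_le_hammingDist_of_iParity_ne (hc : c ∈ C) (hc' : c' ∈ C)
    (h : iParity i c ≠ iParity i c') : 3 ≤ hammingDist c c' := by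
  by_contra! hlt
  exact h (congrArg (iParity i) (hC.eq_of_hammingDist_le_two hc hc' (by omega)))

theorem three_le_hammingDist_add_unitVec_of_iParity_ne (hc : c ∈ C) (hc' : c' ∈ C)
    (h : iParity i c ≠ iParity i c') : 3 ≤ hammingDist (c + unitVec n i) c' := by
  have h3 := hC.three_le_hammingDist_of_iParity_ne hc hc' h
  by_cases hi : c i = c' i
  · rw [hammingDist_add_unitVec_of_eq hi]
    omega
  · have hflip := hammingDist_add_unitVec_of_ne hi
    -- `hammingDist c c'` is even, hence at least 4
    have heven : (hammingDist c c' : ZMod 2) = 0 := by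
      rw [natCast_hammingDist i, ← ZMod.add_one_eq_of_ne h, ← ZMod.add_one_eq_of_ne hi]
      generalize iParity i c = a
      generalize c i = b
      revert a b; decide
    obtain ⟨m, hm⟩ := ZMod.natCast_eq_zero_iff_even.mp heven
    omega

theorem exists_iParity_add_one_hammingDist_add_unitVec_le_two (hn : 4 ≤ n) (hc : c ∈ C)
    (hm : m ≠ i) :
    ∃ c' ∈ C, iParity i c' = iParity i c + 1 ∧ hammingDist (c + unitVec n m) c' ≤ 2 := by
  obtain ⟨k, l, hk, hl, hmem⟩ := hC.exists_add_three_unitVec_mem_of_ne hn hc hm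
  refine ⟨_, hmem, ?_, ?_⟩
  · rw [iParity_add_unitVec_of_ne _ hl, iParity_add_unitVec_of_ne _ hk,
      iParity_add_unitVec_of_ne _ hm, CharTwo.add_cancel_right]
  · have h₁ := hammingDist_add_unitVec_le (c + unitVec n m) (c + unitVec n m) k
    have h₂ := hammingDist_add_unitVec_le (c + unitVec n m) (c + unitVec n m + unitVec n k) l
    rw [hammingDist_self] at h₁
    omega

theorem exists_iParity_add_one_hammingDist_le_three (hn : 4 ≤ n) (hc : c ∈ C)
    (hx : hammingDist c x ≤ 1) :
    ∃ c' ∈ C, iParity i c' = iParity i c + 1 ∧ hammingDist x c' ≤ 3 := by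
  rcases eq_or_eq_add_unitVec_of_hammingDist_le_one hx with rfl | ⟨m, rfl⟩
  · obtain ⟨m, hm⟩ := Fin.exists_notMem_of_card_lt (s := {i}) (by simp; omega)
    obtain ⟨c', hc', hσ, hd⟩ :=
      hC.exists_iParity_add_one_hammingDist_add_unitVec_le_two hn hc (mem_singleton.not.mp hm)
    have := hammingDist_triangle x (x + unitVec n m) c'
    rw [hammingDist_comm x (x + _), hammingDist_add_unitVec_self] at this
    exact ⟨c', hc', hσ, by omega⟩
  · by_cases hm : m = i
    · subst hm
      obtain ⟨j, k, l, hj, hk, hl, hmem⟩ := hC.exists_add_four_unitVec_mem hn hc m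
      refine ⟨_, hmem, ?_, ?_⟩
      · rw [iParity_add_unitVec_of_ne _ hl, iParity_add_unitVec_of_ne _ hk,
          iParity_add_unitVec_of_ne _ hj, iParity_add_unitVec_self, CharTwo.add_cancel_right]
      · set y := c + unitVec n m
        have h₁ := hammingDist_add_unitVec_le y y j
        have h₂ := hammingDist_add_unitVec_le y (y + unitVec n j) k
        have h₃ := hammingDist_add_unitVec_le y (y + unitVec n j + unitVec n k) l
        rw [hammingDist_self] at h₁
        omega
    · obtain ⟨c', hc', hσ, hd⟩ := hC.exists_iParity_add_one_hammingDist_add_unitVec_le_two hn hc hm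
      exact ⟨c', hc', hσ, hd.trans (by norm_num)⟩

end IsPerfectCode

def iParityClass (C : Set (Fin n → ZMod 2)) (i : Fin n) (ε : ZMod 2) : Set (Fin n → ZMod 2) :=
  {c ∈ C | iParity i c = ε}

section iParityClass

variable {C : Set (Fin n → ZMod 2)} {ε ε' : ZMod 2}

theorem setOf_iEven_eq_iParityClass : {x ∈ C | IEven n i x} = iParityClass C i 0 := by
  ext x
  simp [iParityClass, iEven_iff_iParity_eq_zero]

theorem setOf_not_iEven_eq_iParityClass : {x ∈ C | ¬IEven n i x} = iParityClass C i 1 := by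
  ext x
  refine and_congr_right fun _ => ?_
  rw [iEven_iff_iParity_eq_zero]
  generalize iParity i x = a
  revert a; decide

namespace IsPerfectCode

variable (hC : IsPerfectCode n C)
include hC

theorem exists_mem_iParityClass_hammingDist_le_three (hn : 4 ≤ n) (ε : ZMod 2)
    (x : Fin n → ZMod 2) : ∃ c ∈ iParityClass C i ε, hammingDist x c ≤ 3 := by
  obtain ⟨c, ⟨hc, hd⟩, -⟩ := hC x
  by_cases hσ : iParity i c = ε
  · exact ⟨c, ⟨hc, hσ⟩, hd.trans (by norm_num)⟩
  · obtain ⟨c', hc', hσ', hd'⟩ :=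
      hC.exists_iParity_add_one_hammingDist_le_three hn hc (by rwa [hammingDist_comm])
    exact ⟨c', ⟨hc', hσ'.trans (ZMod.add_one_eq_of_ne hσ)⟩, hd'⟩

theorem three_le_hammingDist_of_mem_iParityClass (hε : ε ≠ ε') {u c : Fin n → ZMod 2}
    (hu : u ∈ iParityClass C i ε') (hc : c ∈ iParityClass C i ε) :
    3 ≤ hammingDist u c ∧ 3 ≤ hammingDist (u + unitVec n i) c := by
  have h : iParity i u ≠ iParity i c := by rw [hu.2, hc.2]; exact hε.symm
  exact ⟨hC.three_le_hammingDist_of_iParity_ne hu.1 hc.1 h,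
    hC.three_le_hammingDist_add_unitVec_of_iParity_ne hu.1 hc.1 h⟩

theorem exists_forall_mem_iParityClass_three_le_hammingDist (hn : 4 ≤ n) (ε : ZMod 2) :
    ∃ x, ∀ c ∈ iParityClass C i ε, 3 ≤ hammingDist x c := by
  obtain ⟨u, hu, -⟩ := hC.exists_mem_iParityClass_hammingDist_le_three hn (ε + 1) 0
  exact ⟨u, fun c hc => (hC.three_le_hammingDist_of_mem_iParityClass (by simp) hu hc).1⟩

theorem exists_mem_iParityClass_hammingDist_eq_three (hn : 4 ≤ n) (hε : ε ≠ ε')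
    {u x : Fin n → ZMod 2} (hu : u ∈ iParityClass C i ε') (hx : hammingDist u x ≤ 1)
    (hfar : ∀ c ∈ iParityClass C i ε, 3 ≤ hammingDist x c) :
    ∃ c ∈ iParityClass C i ε, hammingDist x c = 3 := by
  obtain ⟨c, hc, hσ, hd⟩ := hC.exists_iParity_add_one_hammingDist_le_three hn hu.1 hx
  have hmem : c ∈ iParityClass C i ε :=
    ⟨hc, by rw [hσ, hu.2, ZMod.add_one_eq_of_ne hε.symm]⟩
  exact ⟨c, hmem, le_antisymm hd (hfar c hmem)⟩

theorem setOf_hammingDist_iParityClass_eq_three (hn : 4 ≤ n) (hε : ε ≠ ε') :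
    {x | (∃ c ∈ iParityClass C i ε, hammingDist x c = 3) ∧
        ∀ c ∈ iParityClass C i ε, 3 ≤ hammingDist x c} =
      iParityClass C i ε' ∪ (fun x => x + unitVec n i) '' iParityClass C i ε' := by
  ext x
  constructor
  · rintro ⟨-, hfar⟩
    obtain ⟨c, ⟨hc, hd⟩, -⟩ := hC x
    have hσ : iParity i c = ε' := by
      by_contra hne
      have := hfar c ⟨hc, add_right_cancel ((ZMod.add_one_eq_of_ne hne).trans
        (ZMod.add_one_eq_of_ne hε).symm)⟩
      omega
    rcases eq_or_eq_add_unitVec_of_hammingDist_le_one hd with rfl | ⟨m, rfl⟩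
    · exact Or.inl ⟨hc, hσ⟩
    · by_cases hm : m = i
      · subst hm
        exact Or.inr ⟨_, ⟨hc, hσ⟩, add_unitVec_add_unitVec_self x _⟩
      · obtain ⟨c', hc', hσ', hd'⟩ :=
          hC.exists_iParity_add_one_hammingDist_add_unitVec_le_two hn hc hm
        rw [add_unitVec_add_unitVec_self] at hd'
        have := hfar c' ⟨hc', by rw [hσ', hσ, ZMod.add_one_eq_of_ne hε.symm]⟩
        omega
  · rintro (hx | ⟨u, hu, rfl⟩)
    · have hfar c (hc : c ∈ iParityClass C i ε) :=
        (hC.three_le_hammingDist_of_mem_iParityClass hε hx hc).1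
      exact ⟨hC.exists_mem_iParityClass_hammingDist_eq_three hn hε hx (by simp) hfar, hfar⟩
    · have hfar c (hc : c ∈ iParityClass C i ε) :=
        (hC.three_le_hammingDist_of_mem_iParityClass hε hu hc).2
      exact ⟨hC.exists_mem_iParityClass_hammingDist_eq_three hn hε hu
        (by rw [hammingDist_comm, hammingDist_add_unitVec_self]) hfar, hfar⟩

end IsPerfectCode

end iParityClass

theorem stmt_13 (r n : ℕ) (hr : 3 ≤ r) (hn : n = 2 ^ r - 1)
    (C : Set (Fin n → ZMod 2)) (hC : IsPerfectCode n C) (i : Fin n)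
    (I I' : Set (Fin n → ZMod 2))
    (hI : I = {x ∈ C | IEven n i x}) (hI' : I' = {x ∈ C | ¬ IEven n i x}) :
    ((∀ v, ∃ c ∈ I, hammingDist v c ≤ 3) ∧ (∃ v, ∀ c ∈ I, 3 ≤ hammingDist v c)) ∧
    ((∀ v, ∃ c ∈ I', hammingDist v c ≤ 3) ∧ (∃ v, ∀ c ∈ I', 3 ≤ hammingDist v c)) ∧
    {v | (∃ c ∈ I, hammingDist v c = 3) ∧ ∀ c ∈ I, 3 ≤ hammingDist v c} =
      I' ∪ (fun x => x + unitVec n i) '' I' := by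
  have hn4 : 4 ≤ n := by
    have : 2 ^ 3 ≤ 2 ^ r := Nat.pow_le_pow_right (by norm_num) hr
    omega
  subst hI hI'
  rw [setOf_iEven_eq_iParityClass, setOf_not_iEven_eq_iParityClass]
  exact ⟨⟨hC.exists_mem_iParityClass_hammingDist_le_three hn4 0,
      hC.exists_forall_mem_iParityClass_three_le_hammingDist hn4 0⟩,
    ⟨hC.exists_mem_iParityClass_hammingDist_le_three hn4 1,
      hC.exists_forall_mem_iParityClass_three_le_hammingDist hn4 1⟩,
    hC.setOf_hammingDist_iParityClass_eq_three hn4 zero_ne_one⟩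
end

section
/- Let n = 2^r − 1 with r ≥ 2, let m = (n−1)/2, and let R = {(x, |x| mod 2, x) : x ∈ F_2^m} ⊆ F_2^n be the minimal component, where (x, b, x) denotes the concatenation of x, the parity bit b of x, and x again. Then the covering radius of R equals (n−1)/2; i.e., max over v ∈ F_2^n of the minimum Hamming distance from v to R is (n−1)/2. -/
open Finset

/-- The minimal component `R = {(x, |x| mod 2, x) : x ∈ F_2^m}`: the
concatenation of `x`, the parity bit of `x`, and `x` again. -/
def minComponent (m : ℕ) : Set (Fin (m + 1 + m) → ZMod 2) :=
  {v | ∃ x : Fin m → ZMod 2,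
    v = Fin.append (Fin.append x ![(hammingNorm x : ZMod 2)]) x}

lemma hd_split {α : Type*} [DecidableEq α] {a b : ℕ} (f g : Fin (a + b) → α) :
    hammingDist f g = hammingDist (f ∘ Fin.castAdd b) (g ∘ Fin.castAdd b)
      + hammingDist (f ∘ Fin.natAdd a) (g ∘ Fin.natAdd a) := by
  simp only [hammingDist, Finset.card_filter, Function.comp]
  exact Fin.sum_univ_add _

lemma hd_one {α : Type*} [DecidableEq α] (f g : Fin 1 → α) :
    hammingDist f g = if f 0 ≠ g 0 then 1 else 0 := by
  simp [hammingDist, Finset.card_filter]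

lemma parity_flip {m : ℕ} (a : Fin m → ZMod 2) (j : Fin m) :
    ((hammingNorm (Function.update a j (a j + 1)) : ℕ) : ZMod 2)
      = (hammingNorm a : ZMod 2) + 1 := by
  have h2 : ∀ u : ZMod 2, u = 0 ∨ u = 1 := by decide
  set x := Function.update a j (a j + 1) with hx
  rcases h2 (a j) with h | h
  · have hxj : x j = 1 := by simp [hx, h]
    have hset : (Finset.univ.filter fun i => x i ≠ 0)
        = insert j (Finset.univ.filter fun i => a i ≠ 0) := by
      ext i
      rcases eq_or_ne i j with rfl | hij
      · simp [hxj]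
      · simp [hx, Function.update_of_ne hij, hij]
    have hj : j ∉ (Finset.univ.filter fun i => a i ≠ 0) := by simp [h]
    simp only [hammingNorm, Finset.filter_univ_mem]
    rw [show ({i | x i ≠ 0} : Finset (Fin m)) = Finset.univ.filter fun i => x i ≠ 0 from rfl,
      show ({i | a i ≠ 0} : Finset (Fin m)) = Finset.univ.filter fun i => a i ≠ 0 from rfl,
      hset, Finset.card_insert_of_notMem hj]
    push_cast; ring
  · have hxj : x j = 0 := by
      have : (1 : ZMod 2) + 1 = 0 := by decide
      simp [hx, h, this]
    have hset : (Finset.univ.filter fun i => x i ≠ 0)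
        = (Finset.univ.filter fun i => a i ≠ 0).erase j := by
      ext i
      rcases eq_or_ne i j with rfl | hij
      · simp [hxj]
      · simp [hx, Function.update_of_ne hij, hij]
    have hj : j ∈ (Finset.univ.filter fun i => a i ≠ 0) := by simp [h]
    have hc1 : 1 ≤ (Finset.univ.filter fun i => a i ≠ 0).card := Finset.card_pos.mpr ⟨j, hj⟩
    rw [show (hammingNorm x : ℕ) = (Finset.univ.filter fun i => x i ≠ 0).card from rfl,
      show (hammingNorm a : ℕ) = (Finset.univ.filter fun i => a i ≠ 0).card from rfl,
      hset, Finset.card_erase_of_mem hj, Nat.cast_sub hc1]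
    have hneg : (-1 : ZMod 2) = 1 := by decide
    rw [sub_eq_add_neg, Nat.cast_one, hneg]

lemma key {m : ℕ} (hm1 : 1 ≤ m) (a a' : Fin m → ZMod 2) (b : ZMod 2) :
    ∃ x : Fin m → ZMod 2,
      (hammingDist a x + (if b ≠ (hammingNorm x : ZMod 2) then 1 else 0))
        + hammingDist a' x ≤ m := by
  have h2 : ∀ u v : ZMod 2, u ≠ v → v = u + 1 := by decide
  by_cases hab : a = a'
  · refine ⟨a, ?_⟩
    subst hab
    simp only [hammingDist_self, zero_add, add_zero]
    split <;> omega
  · obtain ⟨j, hj⟩ := Function.ne_iff.mp hab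
    have hDj : j ∈ ({i | a i ≠ a' i} : Finset (Fin m)) := by simpa using hj
    have hDle : ({i | a i ≠ a' i} : Finset (Fin m)).card ≤ m := by
      calc ({i | a i ≠ a' i} : Finset (Fin m)).card ≤ (Finset.univ : Finset (Fin m)).card :=
            Finset.card_le_card (Finset.subset_univ _)
        _ = m := by simp
    by_cases hb : b = (hammingNorm a : ZMod 2)
    · refine ⟨a, ?_⟩
      simp only [hammingDist_self, hb, ne_eq, not_true_eq_false, if_false, add_zero, zero_add]
      calc hammingDist a' a = ({i | a' i ≠ a i} : Finset (Fin m)).card := rfl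
        _ = ({i | a i ≠ a' i} : Finset (Fin m)).card := by
            congr 1; ext i; simp [ne_comm]
        _ ≤ m := hDle
    · set x := Function.update a j (a j + 1) with hxdef
      refine ⟨x, ?_⟩
      have h2' : ∀ u v : ZMod 2, u ≠ v → u = v + 1 := by decide
      have hpar : b = (hammingNorm x : ZMod 2) := by
        rw [parity_flip a j]
        exact h2' _ _ hb
      have hd1 : hammingDist a x = 1 := by
        have : ({i | a i ≠ x i} : Finset (Fin m)) = {j} := by
          ext i
          rcases eq_or_ne i j with rfl | hij
          · have hne : ∀ u : ZMod 2, u ≠ u + 1 := by decide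
            simp [hxdef, hne]
          · simp [hxdef, Function.update_of_ne hij, hij]
        simp [hammingDist, this]
      have hd2 : hammingDist a' x = ({i | a i ≠ a' i} : Finset (Fin m)).card - 1 := by
        have haj : a' j = a j + 1 := h2 _ _ hj
        have : ({i | a' i ≠ x i} : Finset (Fin m))
            = ({i | a i ≠ a' i} : Finset (Fin m)).erase j := by
          ext i
          rcases eq_or_ne i j with rfl | hij
          · simp [hxdef, haj]
          · simp [hxdef, Function.update_of_ne hij, hij, ne_comm]
        simp [hammingDist, this, Finset.card_erase_of_mem hDj]
      have hc1 : 1 ≤ ({i | a i ≠ a' i} : Finset (Fin m)).card := Finset.card_pos.mpr ⟨j, hDj⟩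
      rw [hd1, hd2, hpar]
      simp only [ne_eq, not_true_eq_false, if_false, add_zero]
      simp only [ne_eq] at hDle hc1 ⊢
      omega

lemma ones_dist {m : ℕ} (x : Fin m → ZMod 2) :
    hammingDist (fun _ : Fin m => (1 : ZMod 2)) x = m - hammingNorm x := by
  have h : ({i | (1 : ZMod 2) ≠ x i} : Finset (Fin m)) = ({i | x i ≠ 0} : Finset (Fin m))ᶜ := by
    ext i
    have : ∀ u : ZMod 2, ((1 : ZMod 2) ≠ u ↔ ¬ u ≠ 0) := by decide
    simp [this]
  calc hammingDist (fun _ : Fin m => (1 : ZMod 2)) x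
      = ({i | (1 : ZMod 2) ≠ x i} : Finset (Fin m)).card := rfl
    _ = m - hammingNorm x := by
        rw [h, Finset.card_compl]
        simp [hammingNorm]

theorem stmt_17 (r n m : ℕ) (hr : 2 ≤ r) (hn : n = 2 ^ r - 1)
    (hm : n = m + 1 + m) :
    (∀ v : Fin (m + 1 + m) → ZMod 2,
      ∃ c ∈ minComponent m, hammingDist v c ≤ (n - 1) / 2) ∧
    (∃ v : Fin (m + 1 + m) → ZMod 2,
      ∀ c ∈ minComponent m, (n - 1) / 2 ≤ hammingDist v c) := by
  have h4 : 4 ≤ 2 ^ r := by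
    calc (4 : ℕ) = 2 ^ 2 := by norm_num
      _ ≤ 2 ^ r := Nat.pow_le_pow_right (by norm_num) hr
  have hm1 : 1 ≤ m := by omega
  have hhalf : (n - 1) / 2 = m := by omega
  rw [hhalf]
  constructor
  · intro v
    set a : Fin m → ZMod 2 := fun i => v (Fin.castAdd m (Fin.castAdd 1 i)) with ha
    set b : ZMod 2 := v (Fin.castAdd m (Fin.natAdd m 0)) with hb
    set a' : Fin m → ZMod 2 := fun i => v (Fin.natAdd (m + 1) i) with ha'
    obtain ⟨x, hx⟩ := key hm1 a a' b
    refine ⟨Fin.append (Fin.append x ![(hammingNorm x : ZMod 2)]) x, ⟨x, rfl⟩, ?_⟩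
    rw [hd_split]
    have e1 : (Fin.append (Fin.append x ![(hammingNorm x : ZMod 2)]) x) ∘ Fin.castAdd m
        = Fin.append x ![(hammingNorm x : ZMod 2)] := by
      funext i; simp [Fin.append_left]
    have e2 : (Fin.append (Fin.append x ![(hammingNorm x : ZMod 2)]) x) ∘ Fin.natAdd (m + 1)
        = x := by
      funext i; simp [Fin.append_right]
    rw [e1, e2, hd_split]
    have e3 : (Fin.append x ![(hammingNorm x : ZMod 2)]) ∘ Fin.castAdd 1 = x := by
      funext i; simp [Fin.append_left]
    have e4 : (Fin.append x ![(hammingNorm x : ZMod 2)]) ∘ Fin.natAdd m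
        = ![(hammingNorm x : ZMod 2)] := by
      funext i; simp [Fin.append_right]
    rw [e3, e4, hd_one]
    have e5 : (v ∘ Fin.castAdd m) ∘ Fin.castAdd 1 = a := rfl
    have e6 : ((v ∘ Fin.castAdd m) ∘ Fin.natAdd m) 0 = b := rfl
    have e7 : v ∘ Fin.natAdd (m + 1) = a' := rfl
    rw [e5, e6, e7]
    simpa using hx
  · refine ⟨Fin.append (Fin.append (fun _ => 0) ![0]) (fun _ => 1), ?_⟩
    rintro c ⟨x, rfl⟩
    rw [hd_split]
    have E1 : ∀ (u : Fin (m + 1) → ZMod 2) (w : Fin m → ZMod 2),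
        (Fin.append u w) ∘ Fin.castAdd m = u := by
      intro u w; funext i; simp [Fin.append_left]
    have E2 : ∀ (u : Fin (m + 1) → ZMod 2) (w : Fin m → ZMod 2),
        (Fin.append u w) ∘ Fin.natAdd (m + 1) = w := by
      intro u w; funext i; simp [Fin.append_right]
    have E3 : ∀ (u : Fin m → ZMod 2) (w : Fin 1 → ZMod 2),
        (Fin.append u w) ∘ Fin.castAdd 1 = u := by
      intro u w; funext i; simp [Fin.append_left]
    rw [E1, E1, E2, E2, hd_split, E3, E3]
    have hz : hammingDist (fun _ : Fin m => (0 : ZMod 2)) x = hammingNorm x := by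
      have : (fun _ : Fin m => (0 : ZMod 2)) = (0 : Fin m → ZMod 2) := rfl
      rw [this, hammingDist_zero_left]
    have ho := ones_dist x
    have hle : hammingNorm x ≤ m := by
      calc hammingNorm x ≤ Fintype.card (Fin m) := by
            simpa [← hammingDist_zero_right] using
              (hammingDist_le_card_fintype (x := x) (y := (0 : Fin m → ZMod 2)))
        _ = m := by simp
    rw [hz, ho]
    omega
end

section
/- Let n = 2^r − 1 with r ≥ 3, let C ⊆ F_2^n be a perfect binary code, let i be a coordinate, and let x ∈ C be an i-even codeword. Then the number of i-odd codewords of C at Hamming distance exactly 3 from x equals (n−1)(n−3)/6. -/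
/-! The codewords at distance 3 from a codeword `x` form a Steiner triple system on the
coordinates: two coordinates `a ≠ b` lie in the support of `x - y` for exactly one such `y`,
namely the codeword within distance 1 of `x` with `a` and `b` flipped. Double counting then
gives `n(n-1)/6` such `y`, of which `(n-1)/2` have `i` in their support. Since `3` is odd, the
weights of `x` and `y` have opposite parity, so `y` is `i`-odd exactly when `x i = y i`. -/

open Finset Function

section Hamming

variable {ι β : Type*} [Fintype ι] [DecidableEq ι] [DecidableEq β]

theorem hammingDist_update_le (x : ι → β) (j : ι) (b : β) :
    hammingDist x (update x j b) ≤ 1 := by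
  calc hammingDist x (update x j b) ≤ #{j} := by
        refine card_le_card fun k hk ↦ ?_
        by_contra hkj
        simp [update_of_ne (Finset.notMem_singleton.mp hkj)] at hk
    _ = 1 := card_singleton j

theorem hammingDist_update_add_one {x y : ι → β} {j : ι} (h : x j ≠ y j) :
    hammingDist (update x j (y j)) y + 1 = hammingDist x y := by
  have hD : ({k | update x j (y j) k ≠ y k} : Finset ι) =
      ({k | x k ≠ y k} : Finset ι).erase j := by
    ext k
    by_cases hkj : k = j <;> simp [hkj]
  rw [hammingDist, hammingDist, hD, card_erase_add_one (by simpa using h)]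

theorem hammingDist_add_two_le {x y z : ι → β} {j : ι} (hxz : x j = z j) (hyz : y j ≠ z j) :
    hammingDist x z + 2 ≤ hammingDist x y + hammingDist y z := by
  have hxy := hammingDist_update_add_one (x := y) (y := x) (j := j) (hxz ▸ hyz)
  have hyz' := hammingDist_update_add_one hyz
  rw [← hxz] at hyz'
  have := hammingDist_triangle x (update y j (x j)) z
  rw [hammingDist_comm y x, hammingDist_comm (update y j (x j)) x] at *
  omega

end Hamming

theorem ZMod.eq_add_one_of_ne_s18 : ∀ {u w : ZMod 2}, u ≠ w → w = u + 1 := by decide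

theorem ZMod.cast_hammingNorm {ι : Type*} [Fintype ι] (x : ι → ZMod 2) :
    (hammingNorm x : ZMod 2) = ∑ j, x j := by
  rw [hammingNorm, ← sum_filter_ne_zero, card_eq_sum_ones, Nat.cast_sum]
  refine sum_congr rfl fun j hj ↦ ?_
  have : ∀ u : ZMod 2, u ≠ 0 → 1 = u := by decide
  simpa using this _ (mem_filter.mp hj).2

theorem ZMod.cast_hammingDist {ι : Type*} [Fintype ι] (x y : ι → ZMod 2) :
    (hammingDist x y : ZMod 2) = hammingNorm y - hammingNorm x := by
  rw [hammingDist_eq_hammingNorm, ZMod.cast_hammingNorm, ZMod.cast_hammingNorm,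
    ZMod.cast_hammingNorm]
  simp only [Pi.add_apply, Pi.neg_apply, sum_add_distrib, sum_neg_distrib]
  ring

theorem iEven_iff_cast_hammingNorm {n : ℕ} {i : Fin n} {x : Fin n → ZMod 2} :
    IEven n i x ↔ (hammingNorm x : ZMod 2) = x i := by
  rw [IEven, ← ZMod.natCast_eq_one_iff_odd, ← ZMod.natCast_eq_zero_iff_even]
  generalize (hammingNorm x : ZMod 2) = w
  generalize x i = u
  revert u w
  decide

theorem not_iEven_iff_of_odd_hammingDist {n : ℕ} {i : Fin n} {x y : Fin n → ZMod 2}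
    (hx : IEven n i x) (hxy : Odd (hammingDist x y)) : ¬ IEven n i y ↔ x i = y i := by
  rw [← ZMod.natCast_eq_one_iff_odd, ZMod.cast_hammingDist] at hxy
  rw [iEven_iff_cast_hammingNorm] at hx ⊢
  rw [show (hammingNorm y : ZMod 2) = x i + 1 by rw [← hx, ← hxy]; ring]
  generalize x i = u
  generalize y i = w
  revert u w
  decide

namespace IsPerfectCode

variable {n : ℕ} {C : Set (Fin n → ZMod 2)}

theorem three_le_hammingDist (hC : IsPerfectCode n C) {c c' : Fin n → ZMod 2} (hc : c ∈ C)
    (hc' : c' ∈ C) (hne : c ≠ c') : 3 ≤ hammingDist c c' := by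
  by_contra! hlt
  obtain ⟨j, hj⟩ := Function.ne_iff.mp hne
  have hv := hammingDist_update_add_one hj
  have hvc := hammingDist_update_le c j (c' j)
  rw [hammingDist_comm] at hvc
  exact hne ((hC _).unique ⟨hc, hvc⟩ ⟨hc', by omega⟩)

theorem existsUnique_hammingDist_eq_three (hC : IsPerfectCode n C) {x : Fin n → ZMod 2}
    (hx : x ∈ C) {a b : Fin n} (hab : a ≠ b) :
    ∃! y, y ∈ C ∧ hammingDist x y = 3 ∧ x a ≠ y a ∧ x b ≠ y b := by
  set v := update (update x a (x a + 1)) b (x b + 1)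
  have hva : x a ≠ v a := by simp [v, update_of_ne hab]
  have hvb : x b ≠ v b := by simp [v]
  have hxv : hammingDist x v = 2 := by
    have : ({k | x k ≠ v k} : Finset (Fin n)) = {a, b} := by
      ext k
      by_cases hka : k = a
      · simp [hka, hva]
      by_cases hkb : k = b
      · simp [hkb, hvb]
      · simp [v, hka, hkb]
    rw [hammingDist, this, card_pair hab]
  have key : ∀ y ∈ C,
      hammingDist x y = 3 ∧ x a ≠ y a ∧ x b ≠ y b ↔ hammingDist v y ≤ 1 := by
    intro y hy
    constructor
    · rintro ⟨h3, ha, hb⟩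
      have hv : v = update (update x a (y a)) b (y b) := by
        rw [ZMod.eq_add_one_of_ne_s18 ha, ZMod.eq_add_one_of_ne_s18 hb]
      have h1 := hammingDist_update_add_one ha
      have h2 := hammingDist_update_add_one (x := update x a (y a)) (j := b)
        (by rwa [update_of_ne hab.symm])
      rw [hv]
      omega
    · intro hvy
      have hyx : y ≠ x := by
        rintro rfl
        rw [hammingDist_comm] at hvy
        omega
      have h3 := hC.three_le_hammingDist hx hy hyx.symm
      have := hammingDist_triangle x v y
      refine ⟨by omega, fun ha ↦ ?_, fun hb ↦ ?_⟩
      · have := hammingDist_add_two_le ha fun h ↦ hva (ha.trans h.symm)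
        omega
      · have := hammingDist_add_two_le hb fun h ↦ hvb (hb.trans h.symm)
        omega
  obtain ⟨c, ⟨hcC, hc⟩, huniq⟩ := hC v
  exact ⟨c, ⟨hcC, (key c hcC).2 hc⟩,
    fun y ⟨hyC, hy⟩ ↦ huniq y ⟨hyC, (key y hyC).1 hy⟩⟩

variable [DecidablePred (· ∈ C)]

theorem card_hammingDist_eq_three_mul_six (hC : IsPerfectCode n C) {x : Fin n → ZMod 2}
    (hx : x ∈ C) : #{y | y ∈ C ∧ hammingDist x y = 3} * 6 = n * n - n := by
  have h := card_mul_eq_card_mul (m := 6) (n := 1)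
    (s := {y | y ∈ C ∧ hammingDist x y = 3}) (t := (univ : Finset (Fin n)).offDiag)
    (fun y p ↦ x p.1 ≠ y p.1 ∧ x p.2 ≠ y p.2) ?_ ?_
  · rwa [offDiag_card, card_univ, Fintype.card_fin, mul_one] at h
  · intro y hy
    have h3 : #{k | x k ≠ y k} = 3 := (mem_filter.mp hy).2.2
    have hD : bipartiteAbove (fun y p ↦ x p.1 ≠ y p.1 ∧ x p.2 ≠ y p.2) univ.offDiag y =
        ({k | x k ≠ y k} : Finset (Fin n)).offDiag := by
      ext p
      simp only [bipartiteAbove, mem_filter, mem_offDiag, mem_univ, true_and]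
      tauto
    rw [hD, offDiag_card, h3]
  · intro p hp
    simp only [bipartiteBelow, filter_filter, and_assoc]
    exact (Fintype.existsUnique_iff_card_one _).mp
      (hC.existsUnique_hammingDist_eq_three hx (mem_offDiag.mp hp).2.2)

theorem card_hammingDist_eq_three_ne_mul_two (hC : IsPerfectCode n C) {x : Fin n → ZMod 2}
    (hx : x ∈ C) (i : Fin n) :
    #{y | y ∈ C ∧ hammingDist x y = 3 ∧ x i ≠ y i} * 2 = n - 1 := by
  have h := card_mul_eq_card_mul (m := 2) (n := 1)
    (s := {y | y ∈ C ∧ hammingDist x y = 3 ∧ x i ≠ y i}) (t := univ.erase i)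
    (fun y b ↦ x b ≠ y b) ?_ ?_
  · rwa [card_erase_of_mem (mem_univ i), card_univ, Fintype.card_fin, mul_one] at h
  · intro y hy
    obtain ⟨-, h3, hi⟩ := (mem_filter.mp hy).2
    have hD : bipartiteAbove (fun y b ↦ x b ≠ y b) (univ.erase i) y =
        ({k | x k ≠ y k} : Finset (Fin n)).erase i := by
      ext b
      simp [bipartiteAbove, and_comm]
    rw [hD, card_erase_of_mem (by simpa using hi)]
    exact congrArg (· - 1) h3
  · intro b hb
    simp only [bipartiteBelow, filter_filter, and_assoc]
    exact (Fintype.existsUnique_iff_card_one _).mp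
      (hC.existsUnique_hammingDist_eq_three hx (ne_of_mem_erase hb).symm)

theorem card_hammingDist_eq_three_eq_mul_six (hC : IsPerfectCode n C) {x : Fin n → ZMod 2}
    (hx : x ∈ C) (i : Fin n) :
    #{y | y ∈ C ∧ hammingDist x y = 3 ∧ x i = y i} * 6 = (n - 1) * (n - 3) := by
  have hall := hC.card_hammingDist_eq_three_mul_six hx
  have hne := hC.card_hammingDist_eq_three_ne_mul_two hx i
  have hsplit := card_filter_add_card_filter_not (s := {y | y ∈ C ∧ hammingDist x y = 3})
    (fun y ↦ x i = y i)
  simp only [filter_filter, and_assoc, ← ne_eq] at hsplit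
  by_cases hn : n < 3
  · interval_cases n <;> omega
  obtain ⟨m, rfl⟩ := Nat.exists_eq_add_of_le' (not_lt.mp hn)
  have : (m + 3) * (m + 3) - (m + 3) = (m + 2) * m + 3 * (m + 2) := by
    rw [Nat.sub_eq_of_eq_add]; ring
  rw [Nat.add_sub_cancel, show m + 3 - 1 = m + 2 by omega]
  omega

end IsPerfectCode

theorem stmt_18_general (n : ℕ)
    (C : Set (Fin n → ZMod 2)) (hC : IsPerfectCode n C) (i : Fin n)
    (x : Fin n → ZMod 2) (hx : x ∈ C) (hxe : IEven n i x) :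
    {y ∈ C | ¬ IEven n i y ∧ hammingDist x y = 3}.ncard = (n - 1) * (n - 3) / 6 := by
  classical
  have hset : {y ∈ C | ¬ IEven n i y ∧ hammingDist x y = 3} =
      ↑({y | y ∈ C ∧ hammingDist x y = 3 ∧ x i = y i} : Finset _) := by
    ext y
    simp only [Set.mem_ofPred_eq, coe_filter, mem_univ, true_and]
    refine and_congr_right fun _ ↦ and_comm.trans (and_congr_right fun h3 ↦ ?_)
    exact not_iEven_iff_of_odd_hammingDist hxe (by rw [h3]; decide)
  rw [hset, Set.ncard_coe_finset]
  exact (Nat.div_eq_of_eq_mul_left (by norm_num)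
    (hC.card_hammingDist_eq_three_eq_mul_six hx i).symm).symm

theorem stmt_18 (r n : ℕ) (hr : 3 ≤ r) (hn : n = 2 ^ r - 1)
    (C : Set (Fin n → ZMod 2)) (hC : IsPerfectCode n C) (i : Fin n)
    (x : Fin n → ZMod 2) (hx : x ∈ C) (hxe : IEven n i x) :
    {y ∈ C | ¬ IEven n i y ∧ hammingDist x y = 3}.ncard = (n - 1) * (n - 3) / 6 :=
  stmt_18_general n C hC i x hx hxe
end
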